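/- arXiv:1409.4715 — 11 statements merged into one kernel-verified Lean document; each statement's English description precedes it below -/
import Mathlib

section
/- Martingale recurrence: for 0 ≤ n, j ≤ N, k_n(j,N) = p·k_n(j,N+1) + q·k_n(j+1,N+1). -/
open Finset

noncomputable def kraw (lam p q : ℝ) (N j n : ℕ) : ℝ :=
  lam ^ n * ∑ i ∈ Finset.range (n + 1),
    ((N - j).choose (n - i) : ℝ) * (j.choose i : ℝ) * (-1) ^ i * p ^ i * q ^ (n - i)

private lemma choose_split (a n i : ℕ) (hi : i < n) :
    (((a + 1).choose (n - i) : ℝ)) = a.choose (n - 1 - i) + a.choose (n - i) := by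
  have h : n - i = (n - 1 - i) + 1 := by omega
  rw [h, Nat.choose_succ_succ, Nat.succ_eq_add_one, ← h]
  push_cast
  ring

private lemma key (p q : ℝ) (hpq : p + q = 1) (a j n : ℕ) :
    ∑ i ∈ Finset.range (n + 1),
        ((a : ℕ).choose (n - i) : ℝ) * (j.choose i : ℝ) * (-1) ^ i * p ^ i * q ^ (n - i)
    = p * ∑ i ∈ Finset.range (n + 1),
        ((a + 1).choose (n - i) : ℝ) * (j.choose i : ℝ) * (-1) ^ i * p ^ i * q ^ (n - i)
    + q * ∑ i ∈ Finset.range (n + 1),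
        ((a : ℕ).choose (n - i) : ℝ) * ((j + 1).choose i : ℝ) * (-1) ^ i * p ^ i
          * q ^ (n - i) := by
  set S : ℝ := ∑ i ∈ Finset.range (n + 1),
      ((a : ℕ).choose (n - i) : ℝ) * (j.choose i : ℝ) * (-1) ^ i * p ^ i * q ^ (n - i) with hS
  set D : ℝ := ∑ i ∈ Finset.range n,
      ((a : ℕ).choose (n - 1 - i) : ℝ) * (j.choose i : ℝ) * (-1) ^ i * p ^ (i + 1)
        * q ^ (n - i) with hD
  have h1 : p * ∑ i ∈ Finset.range (n + 1),
      ((a + 1).choose (n - i) : ℝ) * (j.choose i : ℝ) * (-1) ^ i * p ^ i * q ^ (n - i)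
      = p * S + D := by
    rw [hS, hD, Finset.mul_sum, Finset.mul_sum, Finset.sum_range_succ, Finset.sum_range_succ]
    have hc : ∀ i ∈ Finset.range n,
        p * (((a + 1).choose (n - i) : ℝ) * (j.choose i : ℝ) * (-1) ^ i * p ^ i * q ^ (n - i))
        = p * (((a : ℕ).choose (n - i) : ℝ) * (j.choose i : ℝ) * (-1) ^ i * p ^ i * q ^ (n - i))
          + ((a : ℕ).choose (n - 1 - i) : ℝ) * (j.choose i : ℝ) * (-1) ^ i * p ^ (i + 1)
            * q ^ (n - i) := by
      intro i hi
      rw [choose_split a n i (Finset.mem_range.mp hi)]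
      ring
    rw [Finset.sum_congr rfl hc, Finset.sum_add_distrib]
    simp only [Nat.sub_self, Nat.choose_zero_right]
    ring
  have h2 : q * ∑ i ∈ Finset.range (n + 1),
      ((a : ℕ).choose (n - i) : ℝ) * ((j + 1).choose i : ℝ) * (-1) ^ i * p ^ i * q ^ (n - i)
      = q * S - D := by
    rw [hS, hD, Finset.mul_sum, Finset.mul_sum, Finset.sum_range_succ', Finset.sum_range_succ']
    have hterm : ∀ i ∈ Finset.range n,
        q * (((a : ℕ).choose (n - (i + 1)) : ℝ) * ((j + 1).choose (i + 1) : ℝ) * (-1) ^ (i + 1)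
            * p ^ (i + 1) * q ^ (n - (i + 1)))
        = q * (((a : ℕ).choose (n - (i + 1)) : ℝ) * (j.choose (i + 1) : ℝ) * (-1) ^ (i + 1)
            * p ^ (i + 1) * q ^ (n - (i + 1)))
          - ((a : ℕ).choose (n - 1 - i) : ℝ) * (j.choose i : ℝ) * (-1) ^ i * p ^ (i + 1)
            * q ^ (n - i) := by
      intro i hi
      have hi' := Finset.mem_range.mp hi
      have e1 : n - 1 - i = n - (i + 1) := by omega
      have e2 : n - i = (n - (i + 1)) + 1 := by omega
      rw [e1, e2]
      push_cast [Nat.choose_succ_succ, pow_succ]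
      ring
    rw [Finset.sum_congr rfl hterm, Finset.sum_sub_distrib]
    simp only [Nat.choose_zero_right, Nat.cast_one]
    ring
  rw [h1, h2]
  linear_combination (-S) * hpq

theorem kraw_martingale (lam p q : ℝ) (hpq : p + q = 1) (N j n : ℕ)
    (hj : j ≤ N) (hn : n ≤ N) :
    kraw lam p q N j n = p * kraw lam p q (N + 1) j n + q * kraw lam p q (N + 1) (j + 1) n := by
  unfold kraw
  have e1 : N + 1 - j = (N - j) + 1 := by omega
  have e2 : N + 1 - (j + 1) = N - j := by omega
  rw [e1, e2, key p q hpq (N - j) j n]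
  ring
end

section
/- Orthogonality: for 0 ≤ m, n ≤ N, Σ_{j=0}^{N} C(N,j) p^{N−j} q^j k_m(j,N) k_n(j,N) = δ_{mn} C(N,n) (λ² p q)^n, i.e. the Krawtchouk polynomials are orthogonal with respect to the binomial distribution with squared norm C(N,n)(λ²pq)^n. -/
open Finset

open Polynomial in
lemma kraw_coeff_one_add {R : Type*} [CommSemiring R] (a : R) (k i : ℕ) :
    ((1 + C a * X : Polynomial R)^k).coeff i = k.choose i * a^i := by
  rw [add_comm, add_pow]
  simp only [one_pow, mul_one, mul_pow, ← C_pow, finset_sum_coeff, coeff_mul_natCast,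
    coeff_C_mul, coeff_X_pow]
  rcases le_or_gt i k with h | h
  · rw [Finset.sum_eq_single i]
    · simp; ring
    · intro b _ hb; simp [Ne.symm hb]
    · intro hi; simp at hi; omega
  · rw [Finset.sum_eq_zero, Nat.choose_eq_zero_of_lt h]
    · simp
    intro b hb; simp at hb; have : ¬ (i = b) := by omega
    simp [this]

open Polynomial in
lemma kraw_eq_coeff (lam p q : ℝ) (N j n : ℕ) :
    kraw lam p q N j n
      = lam ^ n * (((1 + C (-p) * X : Polynomial ℝ))^j * (1 + C q * X)^(N-j)).coeff n := by
  rw [kraw, coeff_mul, Finset.Nat.sum_antidiagonal_eq_sum_range_succ_mk]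
  congr 1
  refine Finset.sum_congr rfl fun i hi => ?_
  rw [kraw_coeff_one_add, kraw_coeff_one_add, neg_pow]
  ring

open Polynomial in
theorem kraw_orthogonality (lam p q : ℝ) (hpq : p + q = 1) (N m n : ℕ)
    (hm : m ≤ N) (hn : n ≤ N) :
    ∑ j ∈ Finset.range (N + 1),
        (N.choose j : ℝ) * p ^ (N - j) * q ^ j * kraw lam p q N j m * kraw lam p q N j n
      = (if m = n then 1 else 0) * (N.choose n : ℝ) * (lam ^ 2 * p * q) ^ n := by
  classical
  set u : Polynomial ℝ := 1 + C q * X with hu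
  set v : Polynomial ℝ := 1 + C (-p) * X with hv
  set A : Polynomial (Polynomial ℝ) := C (C p * u) * (1 + C (C q) * X) with hA
  set B : Polynomial (Polynomial ℝ) := C (C q * v) * (1 + C (C (-p)) * X) with hB
  have hBA : B + A = 1 + C (C (p*q) * X) * X := by
    have hq : q = 1 - p := by linarith
    subst hq
    simp only [hA, hB, hu, hv, map_mul, map_add, map_one, map_sub, map_neg, C_1]
    ring
  have hterm : ∀ j, (((B^j * A^(N-j) * (N.choose j : Polynomial (Polynomial ℝ))).coeff n).coeff m)
      = (N.choose j : ℝ) * p ^ (N-j) * q ^ j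
        * ((v^j * u^(N-j)).coeff m) * ((v^j * u^(N-j)).coeff n) := by
    intro j
    have hmapW : (v^j * u^(N-j)).map (C : ℝ →+* Polynomial ℝ)
        = (1 + C (C (-p)) * X)^j * (1 + C (C q) * X)^(N-j) := by
      simp only [hu, hv, Polynomial.map_mul, Polynomial.map_pow, Polynomial.map_add,
        Polynomial.map_one, map_C, map_X]
    have hNc : (N.choose j : Polynomial (Polynomial ℝ)) = C (C ((N.choose j : ℝ))) := by simp
    have hP : (C q * v)^j * ((C p * u)^(N-j) * C ((N.choose j : ℝ)))
        = C ((N.choose j : ℝ) * (q^j * p^(N-j))) * (v^j * u^(N-j)) := by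
      simp only [mul_pow, map_mul, map_pow]
      ring
    have hprod : B ^ j * A ^ (N - j) * (N.choose j : Polynomial (Polynomial ℝ))
        = C ((C q * v)^j * ((C p * u)^(N-j) * C ((N.choose j : ℝ)))) *
            ((v ^ j * u ^ (N - j)).map (C : ℝ →+* Polynomial ℝ)) := by
      rw [hA, hB, hNc, mul_pow, mul_pow, hmapW]
      simp only [map_mul, map_pow]
      ring
    rw [hprod, coeff_C_mul, coeff_map, coeff_mul_C, hP, coeff_C_mul]
    ring
  have hsum : ∑ j ∈ Finset.range (N + 1),
        (N.choose j : ℝ) * p ^ (N - j) * q ^ j * kraw lam p q N j m * kraw lam p q N j n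
      = lam ^ m * lam ^ n * ((((B + A)^N).coeff n).coeff m) := by
    rw [add_pow]
    simp only [finset_sum_coeff, Finset.mul_sum]
    refine Finset.sum_congr rfl fun j hj => ?_
    rw [kraw_eq_coeff, kraw_eq_coeff, ← hu, ← hv, hterm j]
    ring
  have h1 : (((B + A)^N).coeff n).coeff m
      = (if m = n then 1 else 0) * (N.choose n : ℝ) * (p*q)^n := by
    rw [hBA, kraw_coeff_one_add, mul_pow, ← C_pow,
      show ((N.choose n : Polynomial ℝ)) = C ((N.choose n : ℝ)) by simp,
      coeff_C_mul, coeff_C_mul, coeff_X_pow]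
    rcases eq_or_ne m n with rfl | h
    · simp
    · simp [h, Ne.symm h]
  rw [hsum, h1]
  rcases eq_or_ne m n with rfl | h
  · simp; ring
  · simp [h]
end

section
/- Generating-function inversion: Σ_{j=0}^{N} C(N,j) w^j Σ_{n=0}^{N} (λp)^{N−n} k_n(j,N) (1+λqv)^{N−n}(1−λpv)^n = λ^N (1 + λp·vw)^N as polynomials in v, w. -/
open Finset MvPolynomial
set_option maxRecDepth 20000

lemma triangle {R : Type*} [AddCommMonoid R] (N : ℕ) (f : ℕ → ℕ → R) :
    ∑ n ∈ range (N + 1), ∑ i ∈ range (n + 1), f i (n - i)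
      = ∑ i ∈ range (N + 1), ∑ m ∈ range (N + 1 - i), f i m := by
  induction N with
  | zero => simp
  | succ N ih =>
    rw [sum_range_succ, ih]
    have h1 : ∑ i ∈ range (N + 1 + 1), ∑ m ∈ range (N + 1 + 1 - i), f i m
        = (∑ i ∈ range (N + 1), ∑ m ∈ range (N + 1 + 1 - i), f i m) + f (N + 1) 0 := by
      rw [sum_range_succ]; simp
    have h2 : ∀ i ∈ range (N + 1), ∑ m ∈ range (N + 1 + 1 - i), f i m
        = (∑ m ∈ range (N + 1 - i), f i m) + f i (N + 1 - i) := by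
      intro i hi
      have : N + 1 + 1 - i = (N + 1 - i) + 1 := by
        simp at hi; omega
      rw [this, sum_range_succ]
    rw [h1, sum_congr rfl h2, sum_add_distrib, sum_range_succ (fun i => f i (N + 1 - i))]
    simp [add_assoc]

lemma key_s8 {R : Type*} [CommRing R] (x y a b : R) (M j : ℕ) :
    ∑ n ∈ range (M + j + 1),
        (∑ i ∈ range (n + 1), (M.choose (n - i) : R) * (j.choose i : R) * a ^ (n - i) * b ^ i)
          * x ^ (M + j - n) * y ^ n
      = (x + a * y) ^ M * (x + b * y) ^ j := by
  set F : ℕ → ℕ → R := fun i m =>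
    (M.choose m : R) * (j.choose i : R) * a ^ m * b ^ i * x ^ (M + j - (i + m)) * y ^ (i + m)
    with hF
  have hFM : ∀ i m, M < m → F i m = 0 := by
    intro i m h; simp [hF, Nat.choose_eq_zero_of_lt h]
  have hFj : ∀ i m, j < i → F i m = 0 := by
    intro i m h; simp [hF, Nat.choose_eq_zero_of_lt h]
  -- rewrite LHS as triangle sum of F
  have step1 : ∑ n ∈ range (M + j + 1),
      (∑ i ∈ range (n + 1), (M.choose (n - i) : R) * (j.choose i : R) * a ^ (n - i) * b ^ i)
        * x ^ (M + j - n) * y ^ n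
      = ∑ n ∈ range (M + j + 1), ∑ i ∈ range (n + 1), F i (n - i) := by
    refine sum_congr rfl fun n _ => ?_
    rw [sum_mul, sum_mul]
    refine sum_congr rfl fun i hi => ?_
    have hin : i ≤ n := by simp at hi; omega
    simp only [hF, Nat.add_sub_cancel' hin]
    try ring
  rw [step1, triangle]
  -- extend inner to full range
  have step2 : ∀ i ∈ range (M + j + 1),
      ∑ m ∈ range (M + j + 1 - i), F i m = ∑ m ∈ range (M + j + 1), F i m := by
    intro i hi
    refine sum_subset (by intro m hm; simp at *; omega) ?_
    intro m hm1 hm2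
    simp only [mem_range] at hm1 hm2
    have : M + j < i + m := by omega
    rcases Nat.lt_or_ge M m with h | h
    · exact hFM i m h
    · exact hFj i m (by omega)
  rw [sum_congr rfl step2]
  -- now shrink ranges to (j+1) and (M+1)
  have step3 : ∑ i ∈ range (M + j + 1), ∑ m ∈ range (M + j + 1), F i m
      = ∑ i ∈ range (j + 1), ∑ m ∈ range (M + 1), F i m := by
    rw [← sum_subset (s₁ := range (j + 1)) (by intro i hi; simp at *; omega)
      (fun i _ hi => by
        refine sum_eq_zero fun m _ => hFj i m ?_
        simp at hi; omega)]
    refine sum_congr rfl fun i _ => ?_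
    rw [← sum_subset (s₁ := range (M + 1)) (by intro m hm; simp at *; omega)
      (fun m _ hm => hFM i m (by simp at hm; omega))]
  rw [step3]
  -- expand RHS binomials
  rw [show x + a * y = a * y + x from by ring, show x + b * y = b * y + x from by ring,
    add_pow, add_pow, sum_mul_sum]
  rw [Finset.sum_comm]
  refine sum_congr rfl fun i hi => sum_congr rfl fun m hm => ?_
  simp only [mem_range] at hi hm
  have him : i + m ≤ M + j := by omega
  simp only [hF]
  rw [mul_pow, mul_pow, show M + j - (m + i) = (M - i) + (j - m) from by omega, pow_add, pow_add]
  ring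

noncomputable def V : MvPolynomial (Fin 2) ℝ := MvPolynomial.X 0
noncomputable def W : MvPolynomial (Fin 2) ℝ := MvPolynomial.X 1

lemma key_inner (lam p q : ℝ) (hpq : p + q = 1) (N j : ℕ) (hj : j ≤ N) :
    ∑ n ∈ Finset.range (N + 1),
        MvPolynomial.C ((lam * p) ^ (N - n) * kraw lam p q N j n)
          * (1 + MvPolynomial.C (lam * q) * V) ^ (N - n)
          * (1 - MvPolynomial.C (lam * p) * V) ^ n
      = MvPolynomial.C (lam ^ (N + j) * p ^ j) * V ^ j := by
  set x : MvPolynomial (Fin 2) ℝ := MvPolynomial.C (lam * p) * (1 + MvPolynomial.C (lam * q) * V) with hx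
  set y : MvPolynomial (Fin 2) ℝ := 1 - MvPolynomial.C (lam * p) * V with hy
  set a : MvPolynomial (Fin 2) ℝ := MvPolynomial.C (lam * q) with ha
  set b : MvPolynomial (Fin 2) ℝ := -MvPolynomial.C (lam * p) with hb
  have hM : (N - j) + j = N := Nat.sub_add_cancel hj
  have step1 : ∑ n ∈ Finset.range (N + 1),
      MvPolynomial.C ((lam * p) ^ (N - n) * kraw lam p q N j n)
        * (1 + MvPolynomial.C (lam * q) * V) ^ (N - n)
        * (1 - MvPolynomial.C (lam * p) * V) ^ n
      = ∑ n ∈ Finset.range ((N - j) + j + 1),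
          (∑ i ∈ Finset.range (n + 1),
              (((N - j).choose (n - i) : MvPolynomial (Fin 2) ℝ)) * ((j.choose i : MvPolynomial (Fin 2) ℝ)) * a ^ (n - i) * b ^ i)
            * x ^ ((N - j) + j - n) * y ^ n := by
    rw [hM]
    refine sum_congr rfl fun n _ => ?_
    have hC : (MvPolynomial.C (kraw lam p q N j n) : MvPolynomial (Fin 2) ℝ)
        = ∑ i ∈ Finset.range (n + 1),
            (((N - j).choose (n - i) : MvPolynomial (Fin 2) ℝ)) * ((j.choose i : MvPolynomial (Fin 2) ℝ)) * a ^ (n - i) * b ^ i := by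
      have hr : kraw lam p q N j n = ∑ i ∈ Finset.range (n + 1),
          ((N - j).choose (n - i) : ℝ) * (j.choose i : ℝ) * (lam * q) ^ (n - i)
            * (-(lam * p)) ^ i := by
        rw [kraw, Finset.mul_sum]
        refine sum_congr rfl fun i hi => ?_
        have hin : i ≤ n := by simp at hi; omega
        have hl : lam ^ n = lam ^ (n - i) * lam ^ i := by
          rw [← pow_add, Nat.sub_add_cancel hin]
        rw [hl, neg_pow (lam * p), mul_pow lam q, mul_pow lam p]
        ring
      rw [hr, map_sum]
      refine sum_congr rfl fun i hi => ?_
      rw [ha, hb]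
      simp only [map_mul, map_pow, map_neg, map_natCast]
    rw [map_mul, hC, hx]
    rw [mul_pow (MvPolynomial.C (lam * p)), ← map_pow]
    ring
  rw [step1, key_s8]
  have e1 : x + a * y = MvPolynomial.C lam := by
    have : x + a * y = MvPolynomial.C (lam * p) + MvPolynomial.C (lam * q) := by
      rw [hx, hy, ha]; ring
    rw [this, ← map_add, show lam * p + lam * q = lam from by rw [← mul_add, hpq, mul_one]]
  have e2 : x + b * y = MvPolynomial.C (lam ^ 2 * p) * V := by
    have : x + b * y = MvPolynomial.C (lam * p) * (MvPolynomial.C (lam * q) + MvPolynomial.C (lam * p)) * V := by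
      rw [hx, hy, hb]; ring
    rw [this, ← map_add, show lam * q + lam * p = lam from by rw [← mul_add]; rw [add_comm] at hpq; rw [hpq, mul_one],
      ← map_mul, show lam * p * lam = lam ^ 2 * p from by ring]
  rw [e1, e2, mul_pow, ← map_pow, ← map_pow, ← mul_assoc, ← map_mul,
    show lam ^ (N - j) * (lam ^ 2 * p) ^ j = lam ^ (N + j) * p ^ j from by
      rw [mul_pow, ← pow_mul, ← mul_assoc, ← pow_add,
        show (N - j) + 2 * j = N + j from by omega]]

theorem kraw_gf_inversion (lam p q : ℝ) (hpq : p + q = 1) (N : ℕ) :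
    ∑ j ∈ Finset.range (N + 1),
        MvPolynomial.C ((N.choose j : ℝ)) * W ^ j
          * ∑ n ∈ Finset.range (N + 1),
              MvPolynomial.C ((lam * p) ^ (N - n) * kraw lam p q N j n)
                * (1 + MvPolynomial.C (lam * q) * V) ^ (N - n)
                * (1 - MvPolynomial.C (lam * p) * V) ^ n
      = MvPolynomial.C (lam ^ N) * (1 + MvPolynomial.C (lam * p) * V * W) ^ N := by
  have h1 : ∀ j ∈ Finset.range (N + 1),
      MvPolynomial.C ((N.choose j : ℝ)) * W ^ j
          * ∑ n ∈ Finset.range (N + 1),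
              MvPolynomial.C ((lam * p) ^ (N - n) * kraw lam p q N j n)
                * (1 + MvPolynomial.C (lam * q) * V) ^ (N - n)
                * (1 - MvPolynomial.C (lam * p) * V) ^ n
      = MvPolynomial.C ((N.choose j : ℝ)) * W ^ j
          * (MvPolynomial.C (lam ^ (N + j) * p ^ j) * V ^ j) := by
    intro j hj
    rw [key_inner lam p q hpq N j (by simp at hj; omega)]
  rw [sum_congr rfl h1,
    show (1 + MvPolynomial.C (lam * p) * V * W : MvPolynomial (Fin 2) ℝ)
      = MvPolynomial.C (lam * p) * V * W + 1 from by ring, add_pow, Finset.mul_sum]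
  refine sum_congr rfl fun j hj => ?_
  have h2 : (MvPolynomial.C (lam * p) * V * W : MvPolynomial (Fin 2) ℝ) ^ j
      = MvPolynomial.C ((lam * p) ^ j) * V ^ j * W ^ j := by
    rw [mul_pow, mul_pow, map_pow]
  rw [one_pow, ← map_natCast (MvPolynomial.C : ℝ →+* MvPolynomial (Fin 2) ℝ) (N.choose j), h2,
    show lam ^ (N + j) * p ^ j = lam ^ N * (lam * p) ^ j from by rw [pow_add, mul_pow]; ring,
    map_mul]
  ring
end

section
/- For each 0 ≤ i, j ≤ N, Σ_{n=0}^{N} k_i(n,N) k_n(j,N) = 2^N δ_{ij}. -/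
open Finset

noncomputable def skraw (N j n : ℕ) : ℝ :=
  ∑ i ∈ Finset.range (n + 1), ((N - j).choose (n - i) : ℝ) * (j.choose i : ℝ) * (-1) ^ i

open Polynomial in
noncomputable def skrawQ (N j : ℕ) : Polynomial ℝ :=
  (1 + X) ^ (N - j) * (1 - X) ^ j

open Polynomial in
lemma coeff_one_sub_X_pow (j i : ℕ) :
    ((1 - X : Polynomial ℝ) ^ j).coeff i = (-1) ^ i * (j.choose i : ℝ) := by
  induction j generalizing i with
  | zero =>
    rcases eq_or_ne i 0 with h | h
    · simp [h]
    · simp [h, coeff_one, Nat.choose_eq_zero_of_lt (Nat.pos_of_ne_zero h)]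
  | succ j ih =>
    have h : ((1 - X : Polynomial ℝ) ^ (j + 1)) = (1 - X) ^ j - X * (1 - X) ^ j := by ring
    rw [h, coeff_sub]
    cases i with
    | zero => simp [ih]
    | succ i =>
      rw [coeff_X_mul, ih, ih, Nat.choose_succ_succ']
      push_cast
      ring

open Polynomial in
lemma coeff_skrawQ (N j n : ℕ) : (skrawQ N j).coeff n = skraw N j n := by
  rw [skrawQ, mul_comm, coeff_mul, Finset.Nat.sum_antidiagonal_eq_sum_range_succ_mk, skraw]
  refine Finset.sum_congr rfl fun i _ => ?_
  rw [coeff_one_sub_X_pow, add_comm (1 : Polynomial ℝ) X, coeff_X_add_one_pow]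
  ring

open Polynomial in
lemma natDegree_skrawQ_le (N j : ℕ) (hj : j ≤ N) : (skrawQ N j).natDegree ≤ N := by
  refine le_trans natDegree_mul_le ?_
  have h1 : ((1 + X : Polynomial ℝ) ^ (N - j)).natDegree ≤ N - j := by
    refine le_trans natDegree_pow_le ?_
    have : (1 + X : Polynomial ℝ).natDegree ≤ 1 :=
      le_trans (natDegree_add_le _ _) (by simp)
    nlinarith
  have h2 : ((1 - X : Polynomial ℝ) ^ j).natDegree ≤ j := by
    refine le_trans natDegree_pow_le ?_
    have : (1 - X : Polynomial ℝ).natDegree ≤ 1 :=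
      le_trans (natDegree_sub_le _ _) (by simp)
    nlinarith
  omega

open Polynomial in
lemma skrawQ_key (N j : ℕ) (hj : j ≤ N) :
    ∑ n ∈ Finset.range (N + 1), C (skraw N j n) * skrawQ N n
      = C ((2 : ℝ) ^ N) * X ^ j := by
  rw [← sub_eq_zero]
  apply Polynomial.eq_zero_of_infinite_isRoot
  apply Set.Infinite.mono (s := {x : ℝ | x ≠ -1})
  swap
  · have h : ({x : ℝ | x ≠ -1}) = ({-1} : Set ℝ)ᶜ := rfl
    rw [h]
    exact (Set.finite_singleton _).infinite_compl
  intro x hx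
  have h1x : (1 : ℝ) + x ≠ 0 := fun h => hx (show x = -1 by linarith)
  simp only [Set.mem_setOf_eq, IsRoot, eval_sub, eval_finset_sum, eval_mul, eval_C,
    eval_pow, eval_X, sub_eq_zero]
  set w : ℝ := (1 - x) / (1 + x) with hw
  have hQeval : ∀ m, eval x (skrawQ N m) = (1 + x) ^ (N - m) * (1 - x) ^ m := by
    intro m; simp [skrawQ]
  have hA : ∀ m ∈ Finset.range (N + 1),
      skraw N j m * eval x (skrawQ N m) = (1 + x) ^ N * (skraw N j m * w ^ m) := by
    intro m hm
    rw [Finset.mem_range] at hm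
    rw [hQeval, hw, div_pow,
      show (1 + x) ^ N = (1 + x) ^ (N - m) * (1 + x) ^ m by rw [← pow_add]; congr 1; omega]
    field_simp
  rw [Finset.sum_congr rfl hA, ← Finset.mul_sum]
  have hev : ∑ m ∈ Finset.range (N + 1), skraw N j m * w ^ m = eval w (skrawQ N j) := by
    rw [eval_eq_sum_range' (Nat.lt_succ_of_le (natDegree_skrawQ_le N j hj))]
    exact Finset.sum_congr rfl fun m _ => by rw [coeff_skrawQ]
  rw [hev]
  have hQw : eval w (skrawQ N j) = (1 + w) ^ (N - j) * (1 - w) ^ j := by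
    simp [skrawQ]
  have hw1 : 1 + w = 2 / (1 + x) := by rw [hw]; field_simp; ring
  have hw2 : 1 - w = 2 * x / (1 + x) := by rw [hw]; field_simp; ring
  rw [hQw, hw1, hw2]
  rw [show (1 + x) ^ N = (1 + x) ^ (N - j) * (1 + x) ^ j by rw [← pow_add]; congr 1; omega,
    show (2 : ℝ) ^ N = 2 ^ (N - j) * 2 ^ j by rw [← pow_add]; congr 1; omega]
  rw [div_pow, div_pow, mul_pow]
  field_simp

theorem skraw_square (N i j : ℕ) (hi : i ≤ N) (hj : j ≤ N) :
    ∑ n ∈ Finset.range (N + 1), skraw N n i * skraw N j n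
      = 2 ^ N * (if i = j then 1 else 0) := by
  have h := congrArg (fun p => Polynomial.coeff p i) (skrawQ_key N j hj)
  simp only [Polynomial.finset_sum_coeff, Polynomial.coeff_C_mul, coeff_skrawQ,
    Polynomial.coeff_X_pow] at h
  rw [← h]
  exact Finset.sum_congr rfl fun n _ => mul_comm _ _
end

section
/- General linearization formula: for 0 ≤ ℓ, m ≤ N and all 0 ≤ j ≤ N, k_ℓ(j,N)·k_m(j,N) = Σ_{n} c(ℓ,m,n) k_n(j,N), where c(ℓ,m,n) = Σ_δ [n! / ((n−m+δ)! (n−ℓ+δ)! (ℓ+m−n−2δ)!)] · C(N−n, δ) · (λ(q−p))^{ℓ+m−n−2δ} · (λ²pq)^δ, with the convention that terms with negative factorial arguments vanish. -/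
open Finset

/-- Linearization coefficient `c(ℓ,m,n)`; terms with negative factorial arguments vanish. -/
noncomputable def linCoeff (lam p q : ℝ) (N l m n : ℕ) : ℝ :=
  ∑ δ ∈ Finset.range (N + 1),
    if m ≤ n + δ ∧ l ≤ n + δ ∧ n + 2 * δ ≤ l + m then
      (n.factorial : ℝ) /
          ((n + δ - m).factorial * (n + δ - l).factorial * (l + m - n - 2 * δ).factorial)
        * ((N - n).choose δ : ℝ)
        * (lam * (q - p)) ^ (l + m - n - 2 * δ) * (lam ^ 2 * p * q) ^ δ
    else 0

open Polynomial

lemma triangle_swap {M : Type*} [AddCommMonoid M] (f : ℕ → ℕ → M) (K : ℕ) :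
    ∑ n ∈ range (K+1), ∑ i ∈ range (n+1), f i (n - i)
      = ∑ i ∈ range (K+1), ∑ s ∈ range (K+1-i), f i s := by
  induction K with
  | zero => simp
  | succ K ih =>
      rw [sum_range_succ, ih]
      conv_rhs => rw [sum_range_succ]
      have h1 : ∀ i ∈ range (K+1), ∑ s ∈ range (K+1+1-i), f i s
          = ∑ s ∈ range (K+1-i), f i s + f i (K+1-i) := by
        intro i hi
        rw [mem_range] at hi
        rw [show K+1+1-i = (K+1-i)+1 by omega, sum_range_succ]
      rw [sum_congr rfl h1, sum_add_distrib, show K+1+1-(K+1) = 1 by omega, sum_range_one]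
      rw [sum_range_succ _ (K+1), show K+1-(K+1) = 0 by omega]
      abel

lemma coeff_one_add_pow {R : Type*} [CommRing R] (a : R) (M n : ℕ) :
    ((1 + C a * X) ^ M).coeff n = (M.choose n : R) * a ^ n := by
  have h : (1 + C a * X) ^ M
      = ∑ k ∈ range (M+1), C ((M.choose k : R) * a ^ k) * X ^ k := by
    rw [add_comm, add_pow]
    refine sum_congr rfl fun k hk => ?_
    rw [mul_pow, one_pow, mul_one, map_mul, map_pow, ← C_eq_natCast]
    ring
  rw [h, finset_sum_coeff]
  simp only [coeff_C_mul, coeff_X_pow, mul_ite, mul_one, mul_zero]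
  rw [Finset.sum_ite_eq (range (M+1)) n]
  by_cases hn : n ≤ M
  · simp [Nat.lt_succ_iff, hn]
  · simp [Nat.lt_succ_iff, hn, Nat.choose_eq_zero_of_lt (by omega : M < n)]

noncomputable def Fp (lam p q : ℝ) (N j : ℕ) : Polynomial ℝ :=
  (1 + C (lam*q) * X) ^ (N-j) * (1 + C (-(lam*p)) * X) ^ j

lemma coeff_Fp (lam p q : ℝ) (N j n : ℕ) :
    (Fp lam p q N j).coeff n
      = lam ^ n * ∑ i ∈ Finset.range (n + 1),
        ((N - j).choose (n - i) : ℝ) * (j.choose i : ℝ) * (-1) ^ i * p ^ i * q ^ (n - i) := by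
  rw [Fp, coeff_mul, Finset.Nat.sum_antidiagonal_eq_sum_range_succ_mk, Finset.mul_sum,
    ← Finset.sum_range_reflect]
  refine sum_congr rfl fun k hk => ?_
  rw [mem_range] at hk
  have hk' : k ≤ n := by omega
  simp only [Nat.succ_sub_one]
  rw [coeff_one_add_pow, coeff_one_add_pow]
  rw [show n - (n - k) = k by omega]
  have hl : lam ^ n = lam ^ (n - k) * lam ^ k := by
    rw [← pow_add]; congr 1; omega
  rw [hl]
  ring

lemma Fp_eq (lam p q : ℝ) (hpq : p + q = 1) {N j : ℕ} (hj : j ≤ N) :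
    Fp lam p q N j = ∑ i ∈ range (j+1),
      C ((j.choose i : ℝ) * (-lam)^i) * X^i * (1 + C (lam*q) * X)^(N-i) := by
  have hC : (1 : ℝ[X]) + C (-(lam*p)) * X = (C (-lam) * X) + (1 + C (lam*q) * X) := by
    rw [show -(lam*p) = -lam + lam*q by linear_combination (-lam) * hpq, map_add]
    ring
  rw [Fp, hC, add_pow (C (-lam) * X) (1 + C (lam*q) * X) j, Finset.mul_sum]
  refine sum_congr rfl fun i hi => ?_
  rw [mem_range] at hi
  have hpow : (1 + C (lam*q) * X)^(N-i)
      = (1 + C (lam*q) * X)^(N-j) * (1 + C (lam*q) * X)^(j-i) := by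
    rw [← pow_add]; congr 1; omega
  rw [hpow, show C ((j.choose i : ℝ) * (-lam)^i) = C ((j.choose i : ℝ)) * C (-lam) ^ i by
    rw [C_mul, C_pow], C_eq_natCast]
  ring

lemma coeff_Fp_alt (lam p q : ℝ) (hpq : p + q = 1) {N j : ℕ} (hj : j ≤ N) (n : ℕ) :
    (Fp lam p q N j).coeff n
      = lam ^ n * ∑ i ∈ range (n+1),
          (j.choose i : ℝ) * (-1)^i * ((N-i).choose (n-i) : ℝ) * q^(n-i) := by
  rw [Fp_eq lam p q hpq hj, finset_sum_coeff]
  have hterm : ∀ i, (C ((j.choose i : ℝ) * (-lam)^i) * X^i * (1 + C (lam*q)*X)^(N-i)).coeff n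
      = if i ≤ n then
          ((j.choose i : ℝ) * (-lam)^i) * (((N-i).choose (n-i) : ℝ) * (lam*q)^(n-i)) else 0 := by
    intro i
    rw [show C ((j.choose i:ℝ) * (-lam)^i) * X^i * (1 + C (lam*q)*X)^(N-i)
        = C ((j.choose i:ℝ) * (-lam)^i) * (1 + C (lam*q)*X)^(N-i) * X^i by ring,
      coeff_mul_X_pow', coeff_C_mul, coeff_one_add_pow]
  rw [sum_congr rfl (fun i _ => hterm i)]
  have e1 : ∑ i ∈ range (j+1), (if i ≤ n then
        ((j.choose i : ℝ) * (-lam)^i) * (((N-i).choose (n-i) : ℝ) * (lam*q)^(n-i)) else 0)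
      = ∑ i ∈ range (j+n+1), (if i ≤ n then
        ((j.choose i : ℝ) * (-lam)^i) * (((N-i).choose (n-i) : ℝ) * (lam*q)^(n-i)) else 0) := by
    apply Finset.sum_subset (range_subset_range.2 (by omega))
    intro x hx1 hx2
    rw [mem_range] at hx1 hx2
    rw [Nat.choose_eq_zero_of_lt (show j < x by omega)]
    split_ifs <;> simp
  have e2 : ∑ i ∈ range (n+1), lam^n * ((j.choose i : ℝ) * (-1)^i * ((N-i).choose (n-i) : ℝ) * q^(n-i))
      = ∑ i ∈ range (j+n+1), (if i ≤ n then
        ((j.choose i : ℝ) * (-lam)^i) * (((N-i).choose (n-i) : ℝ) * (lam*q)^(n-i)) else 0) := by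
    rw [← Finset.sum_subset (range_subset_range.2 (by omega : n+1 ≤ j+n+1))
      (fun x hx1 hx2 => by rw [mem_range] at hx1 hx2; rw [if_neg (by omega)])]
    refine sum_congr rfl fun i hi => ?_
    rw [mem_range] at hi
    rw [if_pos (by omega), neg_pow, mul_pow]
    rw [show lam^n = lam^i * lam^(n-i) by rw [← pow_add]; congr 1; omega]
    ring
  rw [e1, Finset.mul_sum, e2]

lemma lemB {A : Type*} [CommRing A] (lm P Q : A) (hpq : P + Q = 1) {N j : ℕ} (hj : j ≤ N)
    (x y : A) :
    ((1 + lm*Q*x)^(N-j) * (1 + (-(lm*P))*x)^j) * ((1 + lm*Q*y)^(N-j) * (1 + (-(lm*P))*y)^j)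
      = ∑ n ∈ range (N+1),
          ((∑ i ∈ range (n+1), (j.choose i : A) * (-1)^i * ((N-i).choose (n-i) : A) * Q^(n-i))
            * lm^n) * ((x + y + lm*(Q-P)*(x*y))^n * (1 + lm^2*P*Q*(x*y))^(N-n)) := by
  have hQ : Q = 1 - P := by rw [← hpq]; ring
  subst hQ
  set z : A := x + y + lm*((1-P)-P)*(x*y) with hz
  set cc : A := lm^2*P*(1-P)*(x*y) with hcc
  set v : A := 1 + lm*(1-P)*z + cc with hv
  set g : ℕ → ℕ → A := fun i s =>
    (j.choose i : A) * (-(lm*z))^i * (((N-i).choose s : A) * (lm*(1-P)*z)^s * (1+cc)^(N-i-s))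
    with hg
  have vpow : ∀ M : ℕ, M ≤ N → v^M
      = ∑ s ∈ range (N+1), ((M.choose s : A) * (lm*(1-P)*z)^s * (1+cc)^(M-s)) := by
    intro M hM
    have h0 : v = lm*(1-P)*z + (1+cc) := by rw [hv]; ring
    rw [h0, add_pow]
    rw [sum_congr rfl (fun s _ => show (lm*(1-P)*z)^s * (1+cc)^(M-s) * (M.choose s : A)
      = (M.choose s : A) * (lm*(1-P)*z)^s * (1+cc)^(M-s) by ring)]
    apply Finset.sum_subset (range_subset_range.2 (by omega))
    intro s hs1 hs2
    rw [mem_range] at hs1 hs2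
    rw [Nat.choose_eq_zero_of_lt (by omega), Nat.cast_zero, zero_mul, zero_mul]
  have hLHS : ((1 + lm*(1-P)*x)^(N-j) * (1 + (-(lm*P))*x)^j)
        * ((1 + lm*(1-P)*y)^(N-j) * (1 + (-(lm*P))*y)^j)
      = ∑ i ∈ range (N+1), ∑ s ∈ range (N+1), g i s := by
    have h1 : (1 + lm*(1-P)*x) * (1 + lm*(1-P)*y) = v := by rw [hv, hz, hcc]; ring
    have h2 : (1 + (-(lm*P))*x) * (1 + (-(lm*P))*y) = -(lm*z) + v := by rw [hv, hz, hcc]; ring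
    rw [mul_mul_mul_comm, ← mul_pow, ← mul_pow, h1, h2, add_pow (-(lm*z)) v j, Finset.mul_sum]
    have h3 : ∀ i ∈ range (j+1), v^(N-j) * ((-(lm*z))^i * v^(j-i) * (j.choose i : A))
        = ∑ s ∈ range (N+1), g i s := by
      intro i hi
      rw [mem_range] at hi
      have h4 : v^(N-j) * ((-(lm*z))^i * v^(j-i) * (j.choose i : A))
          = (j.choose i : A) * (-(lm*z))^i * v^(N-i) := by
        rw [show (N:ℕ) - i = (N-j) + (j-i) by omega, pow_add]
        ring
      rw [h4, vpow (N-i) (by omega), Finset.mul_sum]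
    rw [sum_congr rfl h3]
    apply Finset.sum_subset (range_subset_range.2 (by omega))
    intro i hi1 hi2
    rw [mem_range] at hi1 hi2
    have : (j.choose i : A) = 0 := by
      rw [Nat.choose_eq_zero_of_lt (by omega), Nat.cast_zero]
    apply Finset.sum_eq_zero
    intro s _
    simp only [hg]
    simp [this]
  rw [hLHS]
  have hRHS : ∀ n ∈ range (N+1),
      ((∑ i ∈ range (n+1), (j.choose i : A) * (-1)^i * ((N-i).choose (n-i) : A) * (1-P)^(n-i))
        * lm^n) * (z^n * (1+cc)^(N-n))
      = ∑ i ∈ range (n+1), g i (n-i) := by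
    intro n hn
    rw [mem_range] at hn
    rw [Finset.sum_mul, Finset.sum_mul]
    refine sum_congr rfl fun i hi => ?_
    rw [mem_range] at hi
    simp only [hg]
    have e1 : (-(lm*z))^i = (-1)^i * lm^i * z^i := by rw [neg_pow, mul_pow]; ring
    have e2 : (lm*(1-P)*z)^(n-i) = lm^(n-i) * (1-P)^(n-i) * z^(n-i) := by
      rw [mul_pow, mul_pow]
    have e3 : lm^n = lm^i * lm^(n-i) := by rw [← pow_add]; congr 1; omega
    have e4 : z^n = z^i * z^(n-i) := by rw [← pow_add]; congr 1; omega
    rw [show (N:ℕ) - i - (n-i) = N - n by omega, e1, e2, e3, e4]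
    ring
  rw [sum_congr rfl hRHS, triangle_swap g N]
  refine sum_congr rfl fun i hi => ?_
  rw [mem_range] at hi
  symm
  apply Finset.sum_subset (range_subset_range.2 (by omega))
  intro s hs1 hs2
  rw [mem_range] at hs1 hs2
  simp only [hg]
  rw [Nat.choose_eq_zero_of_lt (show N - i < s by omega), Nat.cast_zero]
  simp

lemma phi_mono (r : ℝ) (A B l m : ℕ) :
    ((((C (C r) : Polynomial (Polynomial ℝ)) * (C X)^A * X^B).coeff m).coeff l)
      = if A = l ∧ B = m then r else 0 := by
  rw [show (C (C r) : Polynomial (Polynomial ℝ)) * (C X)^A * X^B = C (C r * X^A) * X^B by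
    rw [← C_pow, ← C_mul]]
  rw [coeff_C_mul, coeff_X_pow, mul_ite, mul_one, mul_zero]
  by_cases hB : m = B
  · rw [if_pos hB, coeff_C_mul, coeff_X_pow]
    by_cases hA : l = A
    · rw [if_pos hA, mul_one, if_pos ⟨hA.symm, hB.symm⟩]
    · rw [if_neg hA, mul_zero, if_neg (fun h => hA h.1.symm)]
  · rw [if_neg hB, Polynomial.coeff_zero, if_neg (fun h => hB h.2.symm)]

lemma choose_pair_eq (n a0 g0 D1 D2 : ℕ) (ha : a0 ≤ n) (hg : g0 ≤ a0)
    (hD1 : D1 = a0 - g0) (hD2 : D2 = n - a0) :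
    ((n.choose a0 : ℝ) * (a0.choose g0 : ℝ))
      = (n.factorial : ℝ) / (D1.factorial * D2.factorial * g0.factorial) := by
  subst hD1; subst hD2
  rw [eq_div_iff (by positivity)]
  have e1 := Nat.choose_mul_factorial_mul_factorial ha
  have e2 := Nat.choose_mul_factorial_mul_factorial hg
  have key : n.choose a0 * a0.choose g0 *
      ((a0 - g0).factorial * (n - a0).factorial * g0.factorial) = n.factorial := by
    calc n.choose a0 * a0.choose g0 * ((a0 - g0).factorial * (n - a0).factorial * g0.factorial)
        = (a0.choose g0 * g0.factorial * (a0 - g0).factorial) * (n.choose a0 * (n - a0).factorial)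
          := by ring
      _ = a0.factorial * (n.choose a0 * (n - a0).factorial) := by rw [e2]
      _ = n.choose a0 * a0.factorial * (n - a0).factorial := by ring
      _ = n.factorial := e1
  exact_mod_cast congrArg (Nat.cast : ℕ → ℝ) key

lemma phi_val (lam p q : ℝ) (N l m n : ℕ) (hn : n ≤ N) :
    ((((C X + X + C (C (lam*(q-p))) * (C X * X)) ^ n
        * (1 + C (C (lam^2*p*q)) * (C X * X)) ^ (N-n) : Polynomial (Polynomial ℝ)).coeff m).coeff l)
      = linCoeff lam p q N l m n := by
  have h2 : ∀ a : ℕ, ((1 : Polynomial (Polynomial ℝ)) + C (C (lam*(q-p))) * X)^a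
      = ∑ g ∈ range (a+1), C (C ((a.choose g : ℝ) * (lam*(q-p))^g)) * X^g := by
    intro a
    rw [add_comm, add_pow]
    refine sum_congr rfl fun g _ => ?_
    simp only [map_mul, map_pow, C_eq_natCast]
    ring
  have h3 : ((1 : Polynomial (Polynomial ℝ)) + C (C (lam^2*p*q)) * (C X * X))^(N-n)
      = ∑ δ ∈ range (N-n+1),
          C (C ((((N-n).choose δ : ℝ)) * (lam^2*p*q)^δ)) * (C X)^δ * X^δ := by
    rw [add_comm, add_pow]
    refine sum_congr rfl fun δ _ => ?_
    simp only [map_mul, map_pow, C_eq_natCast]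
    ring
  have hz : (C X + X + C (C (lam*(q-p))) * (C X * X) : Polynomial (Polynomial ℝ))
      = C X * (1 + C (C (lam*(q-p))) * X) + X := by ring
  have hzn : ((C X + X + C (C (lam*(q-p))) * (C X * X)) ^ n : Polynomial (Polynomial ℝ))
      = ∑ a ∈ range (n+1), ∑ g ∈ range (a+1),
          C (C ((n.choose a : ℝ) * (a.choose g : ℝ) * (lam*(q-p))^g))
            * (C X)^a * X^((n-a)+g) := by
    rw [hz, add_pow (C X * (1 + C (C (lam*(q-p))) * X)) X n]
    refine sum_congr rfl fun a ha => ?_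
    rw [mul_pow, h2 a, Finset.mul_sum, Finset.sum_mul, Finset.sum_mul]
    refine sum_congr rfl fun g hg => ?_
    rw [mem_range] at hg ha
    rw [show (n:ℕ) - a + g = g + (n - a) by omega, pow_add]
    simp only [map_mul, map_pow, C_eq_natCast]
    ring
  have key : ((C X + X + C (C (lam*(q-p))) * (C X * X)) ^ n
        * (1 + C (C (lam^2*p*q)) * (C X * X)) ^ (N-n) : Polynomial (Polynomial ℝ))
      = ∑ a ∈ range (n+1), ∑ g ∈ range (a+1), ∑ δ ∈ range (N-n+1),
          C (C (((n.choose a : ℝ) * (a.choose g : ℝ) * (((N-n).choose δ : ℝ)))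
              * (lam*(q-p))^g * (lam^2*p*q)^δ)) * (C X)^(a+δ) * X^((n-a)+g+δ) := by
    rw [hzn, h3, Finset.sum_mul]
    refine sum_congr rfl fun a ha => ?_
    rw [Finset.sum_mul]
    refine sum_congr rfl fun g hg => ?_
    rw [Finset.mul_sum]
    refine sum_congr rfl fun δ hδ => ?_
    rw [pow_add, pow_add]
    simp only [map_mul, map_pow, C_eq_natCast]
    ring
  rw [key]
  simp only [finset_sum_coeff, phi_mono]
  -- reorder sums: δ outermost
  rw [sum_congr rfl (fun a _ => Finset.sum_comm), Finset.sum_comm]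
  have hlin : linCoeff lam p q N l m n = ∑ δ ∈ range (N-n+1),
      (if m ≤ n + δ ∧ l ≤ n + δ ∧ n + 2 * δ ≤ l + m then
        (n.factorial : ℝ) /
            ((n + δ - m).factorial * (n + δ - l).factorial * (l + m - n - 2 * δ).factorial)
          * ((N - n).choose δ : ℝ)
          * (lam * (q - p)) ^ (l + m - n - 2 * δ) * (lam ^ 2 * p * q) ^ δ
      else 0) := by
    rw [linCoeff]
    symm
    apply Finset.sum_subset (range_subset_range.2 (by omega))
    intro δ h1 h2
    rw [mem_range] at h1 h2
    rw [Nat.choose_eq_zero_of_lt (show N - n < δ by omega), Nat.cast_zero]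
    split_ifs <;> simp
  rw [hlin]
  refine sum_congr rfl fun δ hδ => ?_
  rw [mem_range] at hδ
  by_cases hc : m ≤ n + δ ∧ l ≤ n + δ ∧ n + 2 * δ ≤ l + m
  · rw [if_pos hc]
    obtain ⟨hc1, hc2, hc3⟩ := hc
    have hδl : δ ≤ l := by omega
    set a0 := l - δ with ha0
    set g0 := l + m - n - 2*δ with hg0
    have ha0n : a0 ≤ n := by omega
    have hg0a : g0 ≤ a0 := by omega
    rw [Finset.sum_eq_single a0]
    · rw [Finset.sum_eq_single g0]
      · rw [if_pos (by constructor <;> omega)]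
        rw [choose_pair_eq n a0 g0 (n+δ-m) (n+δ-l) (by omega) (by omega)
          (by omega) (by omega)]
      · intro g hg hgne
        rw [mem_range] at hg
        rw [if_neg (fun h => hgne (by omega))]
      · intro hmem
        exact absurd (mem_range.2 (by omega)) hmem
    · intro a ha hane
      rw [mem_range] at ha
      apply Finset.sum_eq_zero
      intro g hg
      rw [if_neg (fun h => hane (by omega))]
    · intro hmem
      exact absurd (mem_range.2 (by omega)) hmem
  · rw [if_neg hc]
    apply Finset.sum_eq_zero
    intro a ha
    rw [mem_range] at ha
    apply Finset.sum_eq_zero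
    intro g hg
    rw [mem_range] at hg
    refine if_neg fun h => hc ?_
    obtain ⟨h1, h2⟩ := h
    constructor
    · omega
    constructor <;> omega

theorem kraw_linearization (lam p q : ℝ) (hpq : p + q = 1) (N l m j : ℕ)
    (hl : l ≤ N) (hm : m ≤ N) (hj : j ≤ N) :
    kraw lam p q N j l * kraw lam p q N j m
      = ∑ n ∈ Finset.range (N + 1), linCoeff lam p q N l m n * kraw lam p q N j n := by
  have kraw_eq : ∀ n, kraw lam p q N j n = (Fp lam p q N j).coeff n := by
    intro n; rw [kraw, coeff_Fp]
  have hpq' : (C (C p) : Polynomial (Polynomial ℝ)) + C (C q) = 1 := by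
    rw [← map_add, ← map_add, hpq, map_one, map_one]
  have hB := lemB (C (C lam) : Polynomial (Polynomial ℝ)) (C (C p)) (C (C q)) hpq' hj (C X) X
  have hz2 : (C X + X + C (C lam) * (C (C q) - C (C p)) * (C X * X) : Polynomial (Polynomial ℝ))
      = C X + X + C (C (lam*(q-p))) * (C X * X) := by
    have e : (C (C q) - C (C p) : Polynomial (Polynomial ℝ)) = C (C (q - p)) := by
      rw [← map_sub, ← map_sub]
    rw [e, ← map_mul, ← map_mul]
  have hW2 : ((1 : Polynomial (Polynomial ℝ))
        + (C (C lam))^2 * C (C p) * C (C q) * (C X * X))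
      = 1 + C (C (lam^2*p*q)) * (C X * X) := by
    rw [← map_pow, ← map_pow, ← map_mul, ← map_mul, ← map_mul, ← map_mul]
  rw [hz2, hW2] at hB
  have hx : ((1 : Polynomial (Polynomial ℝ)) + C (C lam) * C (C q) * C X)^(N-j)
        * (1 + (-(C (C lam) * C (C p))) * C X)^j = C (Fp lam p q N j) := by
    simp only [Fp, map_mul, map_pow, map_add, map_one, map_neg]
  have hy : ((1 : Polynomial (Polynomial ℝ)) + C (C lam) * C (C q) * X)^(N-j)
        * (1 + (-(C (C lam) * C (C p))) * X)^j
      = Polynomial.map (C : ℝ →+* Polynomial ℝ) (Fp lam p q N j) := by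
    simp only [Fp, Polynomial.map_mul, Polynomial.map_pow, Polynomial.map_add,
      Polynomial.map_one, Polynomial.map_C, Polynomial.map_X, Polynomial.map_neg, map_mul, map_neg]
  rw [hx, hy] at hB
  have hκ : ∀ n, ((∑ i ∈ range (n+1), ((j.choose i : Polynomial (Polynomial ℝ))) * (-1)^i
        * ((N-i).choose (n-i) : Polynomial (Polynomial ℝ)) * (C (C q))^(n-i))
        * (C (C lam))^n) = C (C (kraw lam p q N j n)) := by
    intro n
    rw [kraw_eq n, coeff_Fp_alt lam p q hpq hj n]
    symm
    simp only [map_mul, map_pow, map_sum, map_neg, map_one, C_eq_natCast]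
    ring
  have hφ := congrArg (fun P : Polynomial (Polynomial ℝ) => (P.coeff m).coeff l) hB
  rw [coeff_C_mul, Polynomial.coeff_map, mul_comm (Fp lam p q N j), coeff_C_mul] at hφ
  rw [← kraw_eq l, ← kraw_eq m] at hφ
  rw [finset_sum_coeff] at hφ
  simp only [finset_sum_coeff] at hφ
  rw [show kraw lam p q N j l * kraw lam p q N j m = kraw lam p q N j m * kraw lam p q N j l from mul_comm _ _, hφ]
  refine sum_congr rfl fun n hn => ?_
  rw [mem_range] at hn
  rw [hκ n, coeff_C_mul, coeff_C_mul, phi_val lam p q N l m n (by omega), mul_comm]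
end

section
/- Generating-function form of linearization: (1+λqv)^{N−j}(1−λpv)^j · (1+λqw)^{N−j}(1−λpw)^j = Σ_{n=0}^{N} (1+λ²pq·vw)^{N−n} (v + w + λ(q−p)vw)^n k_n(j,N) as polynomials in v, w, for every 0 ≤ j ≤ N. -/
open Finset MvPolynomial

lemma expand_aux {R : Type*} [CommRing R] (T S c d : R) (m k : ℕ) :
    (T + c * S) ^ m * (T + d * S) ^ k
      = ∑ n ∈ Finset.range (m + k + 1), T ^ (m + k - n) * S ^ n *
          ∑ i ∈ Finset.range (n + 1),
            (m.choose (n - i) : R) * (k.choose i : R) * c ^ (n - i) * d ^ i := by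
  set M := m + k + 1 with hM
  set F : ℕ → ℕ → R := fun a b =>
    (m.choose a : R) * (k.choose b : R) * c ^ a * d ^ b *
      (T ^ (m + k - (a + b)) * S ^ (a + b)) with hF
  have hFzero : ∀ a b : ℕ, m + k < a + b → F a b = 0 := by
    intro a b h
    rcases Nat.lt_or_ge m a with ha | ha
    · simp [hF, Nat.choose_eq_zero_of_lt ha]
    · have hb : k < b := by omega
      simp [hF, Nat.choose_eq_zero_of_lt hb]
  have hL : (T + c * S) ^ m * (T + d * S) ^ k
      = ∑ a ∈ Finset.range M, ∑ b ∈ Finset.range M, F a b := by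
    rw [show T + c * S = c * S + T by ring, show T + d * S = d * S + T by ring,
      add_pow, add_pow, Finset.sum_mul_sum]
    have step1 : ∀ a ∈ Finset.range (m + 1), ∀ b ∈ Finset.range (k + 1),
        (c * S) ^ a * T ^ (m - a) * (m.choose a : R) *
          ((d * S) ^ b * T ^ (k - b) * (k.choose b : R)) = F a b := by
      intro a ha b hb
      rw [Finset.mem_range] at ha hb
      simp only [hF, mul_pow]
      rw [show m + k - (a + b) = (m - a) + (k - b) by omega, pow_add, pow_add]
      ring
    calc
      ∑ a ∈ Finset.range (m + 1), ∑ b ∈ Finset.range (k + 1),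
          (c * S) ^ a * T ^ (m - a) * (m.choose a : R) *
            ((d * S) ^ b * T ^ (k - b) * (k.choose b : R))
          = ∑ a ∈ Finset.range (m + 1), ∑ b ∈ Finset.range (k + 1), F a b := by
            refine Finset.sum_congr rfl fun a ha => Finset.sum_congr rfl fun b hb => ?_
            exact step1 a ha b hb
      _ = ∑ a ∈ Finset.range (m + 1), ∑ b ∈ Finset.range M, F a b := by
            refine Finset.sum_congr rfl fun a _ => ?_
            refine Finset.sum_subset (Finset.range_subset_range.2 (by omega)) ?_
            intro b _ hb
            rw [Finset.mem_range, not_lt] at hb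
            have : k < b := by omega
            simp [hF, Nat.choose_eq_zero_of_lt this]
      _ = ∑ a ∈ Finset.range M, ∑ b ∈ Finset.range M, F a b := by
            refine Finset.sum_subset (Finset.range_subset_range.2 (by omega)) ?_
            intro a _ ha
            rw [Finset.mem_range, not_lt] at ha
            have : m < a := by omega
            refine Finset.sum_eq_zero fun b _ => ?_
            simp [hF, Nat.choose_eq_zero_of_lt this]
  have hR : ∑ n ∈ Finset.range M, T ^ (m + k - n) * S ^ n *
        ∑ i ∈ Finset.range (n + 1),
          (m.choose (n - i) : R) * (k.choose i : R) * c ^ (n - i) * d ^ i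
      = ∑ a ∈ Finset.range M, ∑ b ∈ Finset.range M, F a b := by
    calc
      ∑ n ∈ Finset.range M, T ^ (m + k - n) * S ^ n *
          ∑ i ∈ Finset.range (n + 1),
            (m.choose (n - i) : R) * (k.choose i : R) * c ^ (n - i) * d ^ i
          = ∑ n ∈ Finset.range M, ∑ i ∈ Finset.range (n + 1), F (n - i) i := by
            refine Finset.sum_congr rfl fun n _ => ?_
            rw [Finset.mul_sum]
            refine Finset.sum_congr rfl fun i hi => ?_
            rw [Finset.mem_range] at hi
            simp only [hF]
            rw [show n - i + i = n by omega]
            ring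
      _ = ∑ a ∈ Finset.range M, ∑ b ∈ Finset.range (M - a), F b a := by
            exact Finset.sum_range_diag_flip M (fun i j => F j i)
      _ = ∑ a ∈ Finset.range M, ∑ b ∈ Finset.range M, F b a := by
            refine Finset.sum_congr rfl fun a ha => ?_
            rw [Finset.mem_range] at ha
            refine Finset.sum_subset (Finset.range_subset_range.2 (by omega)) ?_
            intro b _ hb
            rw [Finset.mem_range, not_lt] at hb
            exact hFzero b a (by omega)
      _ = ∑ a ∈ Finset.range M, ∑ b ∈ Finset.range M, F a b := Finset.sum_comm
  rw [hL, ← hR]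

theorem kraw_gf_linearization (lam p q : ℝ) (hpq : p + q = 1) (N j : ℕ) (hj : j ≤ N) :
    (1 + MvPolynomial.C (lam * q) * V) ^ (N - j) * (1 - MvPolynomial.C (lam * p) * V) ^ j
      * ((1 + MvPolynomial.C (lam * q) * W) ^ (N - j) * (1 - MvPolynomial.C (lam * p) * W) ^ j)
      = ∑ n ∈ Finset.range (N + 1),
          (1 + MvPolynomial.C (lam ^ 2 * p * q) * V * W) ^ (N - n)
            * (V + W + MvPolynomial.C (lam * (q - p)) * V * W) ^ n
            * MvPolynomial.C (kraw lam p q N j n) := by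
  set T : MvPolynomial (Fin 2) ℝ := 1 + MvPolynomial.C (lam ^ 2 * p * q) * V * W with hT
  set S : MvPolynomial (Fin 2) ℝ := V + W + MvPolynomial.C (lam * (q - p)) * V * W with hS
  have hp : p = 1 - q := by linarith
  have key1 : MvPolynomial.C (lam * q) * MvPolynomial.C (lam * q)
      = (MvPolynomial.C (lam ^ 2 * p * q) + MvPolynomial.C (lam * q) * MvPolynomial.C (lam * (q - p))
        : MvPolynomial (Fin 2) ℝ) := by
    rw [← MvPolynomial.C_mul, ← MvPolynomial.C_mul, ← MvPolynomial.C_add]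
    congr 1
    rw [hp]; ring
  have key2 : MvPolynomial.C (lam * p) * MvPolynomial.C (lam * p)
      = (MvPolynomial.C (lam ^ 2 * p * q) - MvPolynomial.C (lam * p) * MvPolynomial.C (lam * (q - p))
        : MvPolynomial (Fin 2) ℝ) := by
    rw [← MvPolynomial.C_mul, ← MvPolynomial.C_mul, ← MvPolynomial.C_sub]
    congr 1
    rw [hp]; ring
  have h1 : (1 + MvPolynomial.C (lam * q) * V) * (1 + MvPolynomial.C (lam * q) * W)
      = T + MvPolynomial.C (lam * q) * S := by
    rw [hT, hS]; linear_combination (V * W) * key1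
  have h2 : (1 - MvPolynomial.C (lam * p) * V) * (1 - MvPolynomial.C (lam * p) * W)
      = T + (-MvPolynomial.C (lam * p)) * S := by
    rw [hT, hS]; linear_combination (V * W) * key2
  have hLHS : (1 + MvPolynomial.C (lam * q) * V) ^ (N - j) * (1 - MvPolynomial.C (lam * p) * V) ^ j
      * ((1 + MvPolynomial.C (lam * q) * W) ^ (N - j) * (1 - MvPolynomial.C (lam * p) * W) ^ j)
      = (T + MvPolynomial.C (lam * q) * S) ^ (N - j) * (T + (-MvPolynomial.C (lam * p)) * S) ^ j := by
    rw [← h1, ← h2, mul_pow, mul_pow]; ring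
  rw [hLHS, expand_aux]
  rw [show N - j + j = N from Nat.sub_add_cancel hj]
  refine Finset.sum_congr rfl fun n hn => ?_
  congr 1
  -- inner sum equals C (kraw ...)
  rw [show kraw lam p q N j n = lam ^ n * ∑ i ∈ Finset.range (n + 1),
      ((N - j).choose (n - i) : ℝ) * (j.choose i : ℝ) * (-1) ^ i * p ^ i * q ^ (n - i) from rfl]
  conv_rhs => rw [map_mul, map_sum]
  rw [Finset.mul_sum]
  refine Finset.sum_congr rfl fun i hi => ?_
  rw [Finset.mem_range] at hi
  have hni : n - i + i = n := by omega
  simp only [map_mul, map_pow, map_natCast, map_neg, map_one]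
  rw [show (MvPolynomial.C lam : MvPolynomial (Fin 2) ℝ) ^ n
      = MvPolynomial.C lam ^ (n - i) * MvPolynomial.C lam ^ i by rw [← pow_add, hni]]
  ring
end

section
/- Symmetric linearization: in the symmetric case, for ℓ + m ≤ N, k_ℓ(j,N)·k_m(j,N) = Σ_n C(n, (ℓ−m+n)/2) · C(N−n, (ℓ+m−n)/2) · k_n(j,N) for all 0 ≤ j ≤ N, where the sum runs over n with ℓ+m−n even, |ℓ−m| ≤ n ≤ ℓ+m. -/
open Finset

/-!
The generating polynomial `G(v) = (1 + v)^(N-j) (1 - v)^j` has degree at most `N`, and its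
homogenization at degree `N` reads `(a + b)^(N-j) (a - b)^j = ∑ₙ kₙ(j,N) bⁿ a^(N-n)`.
Substituting `a = 1 + xy`, `b = x + y`, for which `a + b = (1 + x)(1 + y)` and
`a - b = (1 - x)(1 - y)`, turns the left side into `G(x) G(y)` (in `ℝ[X][X]` we take `x = X` and
`y = C X`). In `(x + y)ⁿ (1 + xy)^(N-n)` the monomial `xˡ yᵐ` arises only from `xᵃ y^(n-a) ⬝ (xy)ˢ`
with `a + s = l` and `n - a + s = m`, which forces `a = (l + n - m)/2` and `s = (l + m - n)/2`.
-/

namespace Polynomial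

variable {R : Type*} [CommSemiring R]

theorem coeff_one_add_C_mul_X_pow (c : R) (r s : ℕ) :
    ((1 + C c * X) ^ r).coeff s = c ^ s * r.choose s := by
  have hexp : (1 + C c * X) ^ r = ∑ k ∈ range (r + 1), C (c ^ k * r.choose k) * X ^ k := by
    rw [add_comm, add_pow]
    refine sum_congr rfl fun k _ ↦ ?_
    simp only [one_pow, mul_one, map_mul, map_pow, map_natCast]
    ring
  rw [hexp, finsetSum_coeff]
  simp only [coeff_C_mul_X_pow, sum_ite_eq, mem_range]
  split_ifs with hs
  · rfl
  · rw [Nat.choose_eq_zero_of_lt (by omega), Nat.cast_zero, mul_zero]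

theorem homogenize_pow (p : R[X]) {d : ℕ} (hp : p.natDegree ≤ d) (k : ℕ) :
    (p ^ k).homogenize (k * d) = p.homogenize d ^ k := by
  simpa using homogenize_finsetProd (s := range k) (p := fun _ ↦ p) (n := fun _ ↦ d) (by simp [hp])

theorem aeval_homogenize {A : Type*} [CommSemiring A] [Algebra R A] (p : R[X]) (n : ℕ)
    (g : Fin 2 → A) :
    MvPolynomial.aeval g (p.homogenize n) =
      ∑ k ∈ range (n + 1), algebraMap R A (p.coeff k) * g 0 ^ k * g 1 ^ (n - k) := by
  simp [homogenize, Finset.Nat.sum_antidiagonal_eq_sum_range_succ_mk, MvPolynomial.aeval_monomial,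
    Finsupp.prod_fintype, mul_assoc]

end Polynomial

open Polynomial

noncomputable def skrawPoly (R : Type*) [CommRing R] (N j : ℕ) : R[X] :=
  (1 + X) ^ (N - j) * (1 - X) ^ j

theorem coeff_skrawPoly (N j n : ℕ) : (skrawPoly ℝ N j).coeff n = skraw N j n := by
  have hsub : (1 - X : ℝ[X]) = 1 + C (-1) * X := by simp [sub_eq_add_neg]
  rw [skrawPoly, mul_comm, coeff_mul, Finset.Nat.sum_antidiagonal_eq_sum_range_succ_mk, skraw, hsub]
  refine sum_congr rfl fun i _ ↦ ?_
  rw [coeff_one_add_C_mul_X_pow, coeff_one_add_X_pow]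
  ring

theorem homogenize_skrawPoly {R : Type*} [CommRing R] {N j : ℕ} (hj : j ≤ N) :
    (skrawPoly R N j).homogenize N =
      (MvPolynomial.X 1 + MvPolynomial.X 0) ^ (N - j) *
        (MvPolynomial.X 1 - MvPolynomial.X 0) ^ j := by
  have h1 : (1 + X : R[X]).natDegree ≤ 1 := (natDegree_add_le _ _).trans (by simp [natDegree_X_le])
  have h2 : (1 - X : R[X]).natDegree ≤ 1 := (natDegree_sub_le _ _).trans (by simp [natDegree_X_le])
  obtain ⟨k, rfl⟩ := Nat.exists_eq_add_of_le' hj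
  have hplus := homogenize_pow _ h1 k
  have hminus := homogenize_pow _ h2 j
  rw [mul_one] at hplus hminus
  rw [skrawPoly, Nat.add_sub_cancel, homogenize_mul _ _ (by simpa using natDegree_pow_le_of_le k h1)
    (by simpa using natDegree_pow_le_of_le j h2), hplus, hminus]
  simp

theorem add_pow_mul_sub_pow_eq_sum_skraw {A : Type*} [CommRing A] [Algebra ℝ A] {N j : ℕ}
    (hj : j ≤ N) (a b : A) :
    (a + b) ^ (N - j) * (a - b) ^ j =
      ∑ n ∈ range (N + 1), algebraMap ℝ A (skraw N j n) * b ^ n * a ^ (N - n) := by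
  have := aeval_homogenize (skrawPoly ℝ N j) N ![b, a]
  rw [homogenize_skrawPoly hj] at this
  simpa [coeff_skrawPoly] using this

section

variable {R : Type*} [CommSemiring R]

theorem coeff_coeff_X_add_C_X_pow_mul_one_add_C_X_mul_X_pow (n r l m : ℕ) :
    (((X + C X : R[X][X]) ^ n * (1 + C X * X) ^ r).coeff l).coeff m =
      ∑ p ∈ antidiagonal l, if m = n - p.1 + p.2 then (n.choose p.1 * r.choose p.2 : R) else 0 := by
  rw [coeff_mul, finsetSum_coeff]
  refine sum_congr rfl fun p _ ↦ ?_
  rw [coeff_X_add_C_pow, coeff_one_add_C_mul_X_pow, ← C_eq_natCast, ← C_eq_natCast,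
    show X ^ (n - p.1) * C (n.choose p.1 : R) * (X ^ p.2 * C (r.choose p.2 : R)) =
      C (n.choose p.1 * r.choose p.2 : R) * X ^ (n - p.1 + p.2) by rw [pow_add, C_mul]; ring,
    coeff_C_mul_X_pow]

theorem sum_antidiagonal_ite_choose_mul_choose (n r l m : ℕ) :
    ∑ p ∈ antidiagonal l, (if m = n - p.1 + p.2 then (n.choose p.1 * r.choose p.2 : R) else 0) =
      if (l + m - n) % 2 = 0 ∧ m ≤ l + n ∧ l ≤ m + n ∧ n ≤ l + m then
        (n.choose ((l + n - m) / 2) * r.choose ((l + m - n) / 2) : R) else 0 := by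
  have hterm : ∀ p ∈ antidiagonal l, (if m = n - p.1 + p.2 then (n.choose p.1 * r.choose p.2 : R)
      else 0) ≠ 0 → (l + m - n) % 2 = 0 ∧ m ≤ l + n ∧ l ≤ m + n ∧ n ≤ l + m ∧
        p = ((l + n - m) / 2, (l + m - n) / 2) := by
    rintro ⟨a, s⟩ hp hne
    rw [HasAntidiagonal.mem_antidiagonal] at hp
    split_ifs at hne with hm
    · have ha : a ≤ n := by
        by_contra! ha
        simp [Nat.choose_eq_zero_of_lt ha] at hne
      refine ⟨by omega, by omega, by omega, by omega, Prod.ext (by omega) (by omega)⟩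
    · exact absurd rfl hne
  split_ifs with h
  · rw [sum_eq_single_of_mem ((l + n - m) / 2, (l + m - n) / 2) (by simp; omega), if_pos (by omega)]
    intro p hp hne
    by_contra h'
    exact hne (hterm p hp h').2.2.2.2
  · refine sum_eq_zero fun p hp ↦ ?_
    by_contra h'
    obtain ⟨h1, h2, h3, h4, -⟩ := hterm p hp h'
    exact h ⟨h1, h2, h3, h4⟩

end

theorem skraw_linearization_general (N l m j : ℕ) (hj : j ≤ N) :
    skraw N j l * skraw N j m
      = ∑ n ∈ Finset.range (N + 1),
          (if (l + m - n) % 2 = 0 ∧ m ≤ l + n ∧ l ≤ m + n ∧ n ≤ l + m then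
              ((n.choose ((l + n - m) / 2) : ℝ) * ((N - n).choose ((l + m - n) / 2) : ℝ))
            else 0) * skraw N j n := by
  have hprod : (1 + C X * X + (X + C X) : ℝ[X][X]) ^ (N - j) * (1 + C X * X - (X + C X)) ^ j =
      (skrawPoly ℝ N j).map C * C (skrawPoly ℝ N j) := by
    rw [show (1 + C X * X + (X + C X) : ℝ[X][X]) = (1 + X) * (1 + C X) by ring,
      show (1 + C X * X - (X + C X) : ℝ[X][X]) = (1 - X) * (1 - C X) by ring]
    simp only [skrawPoly, Polynomial.map_mul, Polynomial.map_pow, Polynomial.map_add,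
      Polynomial.map_sub, Polynomial.map_one, map_X, map_mul, map_pow, map_add, map_sub, map_one]
    rw [mul_pow, mul_pow, mul_mul_mul_comm]
  have hcoeff := congrArg (fun q ↦ (q.coeff l).coeff m)
    (add_pow_mul_sub_pow_eq_sum_skraw hj (1 + C X * X : ℝ[X][X]) (X + C X))
  simp only [hprod, coeff_mul_C, coeff_map, coeff_C_mul, finsetSum_coeff,
    Polynomial.algebraMap_apply, Algebra.algebraMap_self, RingHom.id_apply, mul_assoc,
    coeff_skrawPoly] at hcoeff
  rw [hcoeff]
  refine sum_congr rfl fun n _ ↦ ?_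
  rw [coeff_coeff_X_add_C_X_pow_mul_one_add_C_X_mul_X_pow,
    sum_antidiagonal_ite_choose_mul_choose, mul_comm]

theorem skraw_linearization (N l m j : ℕ) (hlm : l + m ≤ N) (hj : j ≤ N) :
    skraw N j l * skraw N j m
      = ∑ n ∈ Finset.range (N + 1),
          (if (l + m - n) % 2 = 0 ∧ m ≤ l + n ∧ l ≤ m + n ∧ n ≤ l + m then
              ((n.choose ((l + n - m) / 2) : ℝ) * ((N - n).choose ((l + m - n) / 2) : ℝ))
            else 0) * skraw N j n :=
  skraw_linearization_general N l m j hj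
end

section
/- Symmetric convolution theorem: define (f⋆g)(n) = Σ_{a,b} C(n,a) C(N−n,b) f(a+b) g(n−a+b) for functions f, g on {0,…,N} (with f, g extended by 0 outside). Then for every 0 ≤ j ≤ N, F(j)·G(j) = Σ_{n=0}^{N} (f⋆g)(n) k_n(j,N), where F(j) = Σ_n f(n) k_n(j,N) and G(j) = Σ_m g(m) k_m(j,N). -/
open Finset

/-- Symmetric Krawtchouk convolution of `f` and `g`. -/
noncomputable def sconv (N : ℕ) (f g : ℕ → ℝ) (n : ℕ) : ℝ :=
  ∑ a ∈ Finset.range (n + 1), ∑ b ∈ Finset.range (N - n + 1),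
    (n.choose a : ℝ) * ((N - n).choose b : ℝ) * f (a + b) * g (n - a + b)

open scoped symmDiff

lemma aux_powerset_union {s t : Finset ℕ} (hst : Disjoint s t) (F : Finset ℕ → ℝ) :
    ∑ U ∈ (s ∪ t).powerset, F U = ∑ A ∈ s.powerset, ∑ B ∈ t.powerset, F (A ∪ B) := by
  rw [← Finset.sum_product']
  refine Finset.sum_nbij' (fun U => (U ∩ s, U ∩ t)) (fun p => p.1 ∪ p.2) ?_ ?_ ?_ ?_ ?_
  · intro U hU
    simp [Finset.mem_product, Finset.inter_subset_right]
  · intro p hp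
    simp only [Finset.mem_product, Finset.mem_powerset] at *
    exact Finset.union_subset_union hp.1 hp.2
  · intro U hU
    simp only [Finset.mem_powerset] at hU
    show U ∩ s ∪ U ∩ t = U
    rw [← Finset.inter_union_distrib_left]
    exact Finset.inter_eq_left.2 hU
  · intro p hp
    simp only [Finset.mem_product, Finset.mem_powerset] at hp
    obtain ⟨A, B⟩ := p
    obtain ⟨hA, hB⟩ := hp
    have h1 : A ∩ s = A := Finset.inter_eq_left.2 hA
    have h2 : B ∩ t = B := Finset.inter_eq_left.2 hB
    have h3 : B ∩ s = ∅ := Finset.disjoint_iff_inter_eq_empty.1 (hst.symm.mono_left hB)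
    have h4 : A ∩ t = ∅ := Finset.disjoint_iff_inter_eq_empty.1 (hst.mono_left hA)
    show ((A ∪ B) ∩ s, (A ∪ B) ∩ t) = (A, B)
    rw [Finset.union_inter_distrib_right, Finset.union_inter_distrib_right, h1, h2, h3, h4,
      Finset.union_empty, Finset.empty_union]
  · intro U hU
    simp only [Finset.mem_powerset] at hU
    show F U = F (U ∩ s ∪ U ∩ t)
    rw [← Finset.inter_union_distrib_left, Finset.inter_eq_left.2 hU]

lemma aux_triangle (N : ℕ) (h : ℕ → ℕ → ℝ) :
    ∑ n ∈ range (N + 1), ∑ i ∈ range (n + 1), h i (n - i)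
      = ∑ i ∈ range (N + 1), ∑ b ∈ range (N + 1 - i), h i b := by
  rw [Finset.sum_sigma', Finset.sum_sigma']
  refine Finset.sum_nbij' (fun x => ⟨x.2, x.1 - x.2⟩) (fun x => ⟨x.1 + x.2, x.1⟩) ?_ ?_ ?_ ?_ ?_
  · intro a ha
    simp only [Finset.mem_sigma, Finset.mem_range] at *
    omega
  · intro a ha
    simp only [Finset.mem_sigma, Finset.mem_range] at *
    omega
  · intro a ha
    obtain ⟨n, i⟩ := a
    simp only [Finset.mem_sigma, Finset.mem_range] at ha
    have h' : i + (n - i) = n := by omega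
    simp [h']
  · intro a ha
    obtain ⟨i, b⟩ := a
    simp
  · intro a ha
    rfl

lemma aux_card_symmDiff (a b : Finset ℕ) :
    a.card + b.card = (a ∆ b).card + 2 * (a ∩ b).card := by
  have h1 : a ∆ b = (a ∪ b) \ (a ∩ b) := by
    ext x; simp [Finset.mem_symmDiff]; tauto
  have h2 := Finset.card_union_add_card_inter a b
  have h3 : (a ∩ b) ⊆ (a ∪ b) := (Finset.inter_subset_left).trans Finset.subset_union_left
  have h4 := Finset.card_sdiff_of_subset h3
  have h5 := Finset.card_le_card h3
  rw [h1]
  omega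

lemma aux_sign (S T J : Finset ℕ) :
    (-1 : ℝ) ^ ((S ∩ J).card) * (-1) ^ ((T ∩ J).card) = (-1) ^ (((S ∆ T) ∩ J).card) := by
  have h1 : (S ∆ T) ∩ J = (S ∩ J) ∆ (T ∩ J) := by
    ext x; simp [Finset.mem_symmDiff]; tauto
  rw [← pow_add, h1, aux_card_symmDiff (S ∩ J) (T ∩ J), pow_add, pow_mul]
  simp

lemma aux_transform (N j : ℕ) (hj : j ≤ N) (f : ℕ → ℝ) :
    ∑ n ∈ range (N + 1), f n * skraw N j n
      = ∑ S ∈ (range N).powerset, f S.card * (-1 : ℝ) ^ ((S ∩ range j).card) := by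
  set hh : ℕ → ℕ → ℝ := fun i b => ((N-j).choose b : ℝ) * (j.choose i) * (-1)^i * f (i+b) with hhh
  have lhs1 : ∑ n ∈ range (N + 1), f n * skraw N j n
      = ∑ n ∈ range (N + 1), ∑ i ∈ range (n + 1), hh i (n - i) := by
    refine Finset.sum_congr rfl fun n _ => ?_
    rw [skraw, Finset.mul_sum]
    refine Finset.sum_congr rfl fun i hi => ?_
    rw [Finset.mem_range] at hi
    have h' : i + (n - i) = n := by omega
    simp only [hhh, h']
    ring
  have lhs2 := aux_triangle N hh
  have shrink1 : ∀ i, i ≤ j → ∑ b ∈ range (N - j + 1), hh i b = ∑ b ∈ range (N + 1 - i), hh i b := by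
    intro i hi
    refine Finset.sum_subset (Finset.range_subset_range.2 (by omega)) fun b hb hb' => ?_
    rw [Finset.mem_range] at hb hb'
    have : (N - j).choose b = 0 := Nat.choose_eq_zero_of_lt (by omega)
    simp [hhh, this]
  have shrink2 : ∑ i ∈ range (j + 1), ∑ b ∈ range (N - j + 1), hh i b
      = ∑ i ∈ range (N + 1), ∑ b ∈ range (N + 1 - i), hh i b := by
    rw [← Finset.sum_subset (Finset.range_subset_range.2 (by omega : j + 1 ≤ N + 1)) ?van]
    · exact Finset.sum_congr rfl fun i hi => shrink1 i (by simpa using Nat.lt_succ_iff.1 (Finset.mem_range.1 hi))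
    case van =>
      intro i hi hi'
      rw [Finset.mem_range] at hi hi'
      have : j.choose i = 0 := Nat.choose_eq_zero_of_lt (by omega)
      simp [hhh, this]
  -- RHS
  set t : Finset ℕ := range N \ range j with htdef
  have hu : range j ∪ t = range N :=
    Finset.union_sdiff_of_subset (Finset.range_subset_range.2 hj)
  have hd : Disjoint (range j) t := Finset.disjoint_sdiff
  have hcard : t.card = N - j := by
    rw [htdef, Finset.card_sdiff_of_subset (Finset.range_subset_range.2 hj), Finset.card_range, Finset.card_range]
  have rhs1 : ∑ S ∈ (range N).powerset, f S.card * (-1 : ℝ) ^ ((S ∩ range j).card)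
      = ∑ A ∈ (range j).powerset, ∑ B ∈ t.powerset,
          f (A.card + B.card) * (-1 : ℝ) ^ A.card := by
    rw [← hu, aux_powerset_union hd]
    refine Finset.sum_congr rfl fun A hA => Finset.sum_congr rfl fun B hB => ?_
    rw [Finset.mem_powerset] at hA hB
    have hAB : Disjoint A B := hd.mono hA hB
    have h1 : (A ∪ B) ∩ range j = A := by
      rw [Finset.union_inter_distrib_right, Finset.inter_eq_left.2 hA,
        Finset.disjoint_iff_inter_eq_empty.1 ((hd.symm).mono_left hB),
        Finset.union_empty]
    rw [h1, Finset.card_union_of_disjoint hAB]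
  have rhs2 : ∑ A ∈ (range j).powerset, ∑ B ∈ t.powerset,
          f (A.card + B.card) * (-1 : ℝ) ^ A.card
      = ∑ i ∈ range (j + 1), (j.choose i) •
          ∑ b ∈ range (N - j + 1), ((N - j).choose b) • (f (i + b) * (-1 : ℝ) ^ i) := by
    have inner : ∀ A : Finset ℕ, ∑ B ∈ t.powerset,
        f (A.card + B.card) * (-1 : ℝ) ^ A.card
        = ∑ b ∈ range (N - j + 1), ((N - j).choose b) • (f (A.card + b) * (-1 : ℝ) ^ A.card) := by
      intro A
      rw [Finset.sum_powerset_apply_card (fun b => f (A.card + b) * (-1 : ℝ) ^ A.card), hcard]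
    rw [Finset.sum_congr rfl fun A _ => inner A,
      Finset.sum_powerset_apply_card (fun i => ∑ b ∈ range (N - j + 1),
        ((N - j).choose b) • (f (i + b) * (-1 : ℝ) ^ i)), Finset.card_range]
  rw [lhs1, lhs2, rhs1, rhs2, ← shrink2]
  refine Finset.sum_congr rfl fun i _ => ?_
  rw [Finset.smul_sum]
  refine Finset.sum_congr rfl fun b _ => ?_
  simp only [hhh, nsmul_eq_mul, smul_eq_mul]
  push_cast
  ring

lemma aux_sconv (N : ℕ) (f g : ℕ → ℝ) (U : Finset ℕ) (hU : U ⊆ range N) :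
    sconv N f g U.card
      = ∑ A ∈ U.powerset, ∑ C ∈ (range N \ U).powerset,
          f (A.card + C.card) * g (U.card - A.card + C.card) := by
  have hcard : (range N \ U).card = N - U.card := by
    rw [Finset.card_sdiff_of_subset hU, Finset.card_range]
  have inner : ∀ A : Finset ℕ, ∑ C ∈ (range N \ U).powerset,
      f (A.card + C.card) * g (U.card - A.card + C.card)
      = ∑ b ∈ range (N - U.card + 1),
          ((N - U.card).choose b) • (f (A.card + b) * g (U.card - A.card + b)) := by
    intro A
    rw [Finset.sum_powerset_apply_card (fun b => f (A.card + b) * g (U.card - A.card + b)), hcard]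
  rw [Finset.sum_congr rfl fun A _ => inner A,
    Finset.sum_powerset_apply_card (fun a => ∑ b ∈ range (N - U.card + 1),
      ((N - U.card).choose b) • (f (a + b) * g (U.card - a + b)))]
  rw [sconv]
  refine Finset.sum_congr rfl fun a _ => ?_
  rw [Finset.smul_sum]
  refine Finset.sum_congr rfl fun b _ => ?_
  simp only [nsmul_eq_mul]
  ring

lemma aux_decomp {s U A C : Finset ℕ} (hU : U ⊆ s) (hA : A ⊆ U) (hC : C ⊆ s \ U) :
    (A ∪ C) ∆ ((U \ A) ∪ C) = U ∧ (A ∪ C).card = A.card + C.card ∧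
      ((U \ A) ∪ C).card = (U.card - A.card) + C.card := by
  have h1 : ∀ x, x ∈ A → x ∈ U := fun x h => hA h
  have h2 : ∀ x, x ∈ C → x ∉ U := fun x h => (Finset.mem_sdiff.1 (hC h)).2
  have hAC : Disjoint A C := Finset.disjoint_left.2 fun {x} hx hx' => h2 x hx' (h1 x hx)
  have hUC : Disjoint (U \ A) C :=
    Finset.disjoint_left.2 fun {x} hx hx' => h2 x hx' (Finset.mem_sdiff.1 hx).1
  refine ⟨?_, Finset.card_union_of_disjoint hAC, ?_⟩
  · ext x
    have := h1 x; have := h2 x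
    simp only [Finset.mem_symmDiff, Finset.mem_union, Finset.mem_sdiff]
    tauto
  · rw [Finset.card_union_of_disjoint hUC, Finset.card_sdiff_of_subset hA]

lemma aux_bij (s : Finset ℕ) (H : Finset ℕ → Finset ℕ → ℝ) :
    ∑ S ∈ s.powerset, ∑ T ∈ s.powerset, H S T
      = ∑ U ∈ s.powerset, ∑ A ∈ U.powerset, ∑ C ∈ (s \ U).powerset,
          H (A ∪ C) ((U \ A) ∪ C) := by
  rw [← Finset.sum_product']
  have flat : ∀ U : Finset ℕ, (∑ A ∈ U.powerset, ∑ C ∈ (s \ U).powerset,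
      H (A ∪ C) ((U \ A) ∪ C))
      = ∑ p ∈ U.powerset ×ˢ (s \ U).powerset, H (p.1 ∪ p.2) ((U \ p.1) ∪ p.2) :=
    fun U => (Finset.sum_product' _ _ _).symm
  rw [Finset.sum_congr rfl fun U _ => flat U, Finset.sum_sigma']
  refine Finset.sum_nbij' (fun p => ⟨p.1 ∆ p.2, (p.1 \ p.2, p.1 ∩ p.2)⟩)
    (fun x => (x.2.1 ∪ x.2.2, (x.1 \ x.2.1) ∪ x.2.2)) ?_ ?_ ?_ ?_ ?_
  · rintro ⟨S, T⟩ hp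
    simp only [Finset.mem_product, Finset.mem_powerset] at hp
    obtain ⟨hS, hT⟩ := hp
    simp only [Finset.mem_sigma, Finset.mem_product, Finset.mem_powerset]
    refine ⟨?_, ?_, ?_⟩ <;> intro x hx <;>
      simp only [Finset.mem_symmDiff, Finset.mem_sdiff, Finset.mem_inter] at hx ⊢
    · rcases hx with ⟨h, _⟩ | ⟨h, _⟩
      · exact hS h
      · exact hT h
    · tauto
    · exact ⟨hS hx.1, by tauto⟩
  · rintro ⟨U, A, C⟩ hx
    simp only [Finset.mem_sigma, Finset.mem_product, Finset.mem_powerset] at hx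
    obtain ⟨hU, hA, hC⟩ := hx
    simp only [Finset.mem_product, Finset.mem_powerset]
    constructor <;> intro x hx <;> simp only [Finset.mem_union, Finset.mem_sdiff] at hx
    · rcases hx with h | h
      · exact hU (hA h)
      · exact (Finset.mem_sdiff.1 (hC h)).1
    · rcases hx with ⟨h, _⟩ | h
      · exact hU h
      · exact (Finset.mem_sdiff.1 (hC h)).1
  · rintro ⟨S, T⟩ hp
    simp only [Prod.mk.injEq]
    constructor
    · ext x
      simp only [Finset.mem_union, Finset.mem_sdiff, Finset.mem_inter]
      tauto
    · ext x
      simp only [Finset.mem_union, Finset.mem_sdiff, Finset.mem_inter, Finset.mem_symmDiff]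
      tauto
  · rintro ⟨U, A, C⟩ hx
    simp only [Finset.mem_sigma, Finset.mem_product, Finset.mem_powerset] at hx
    obtain ⟨hU, hA, hC⟩ := hx
    have h1 : ∀ x, x ∈ A → x ∈ U := fun x h => hA h
    have h2 : ∀ x, x ∈ C → x ∉ U := fun x h => (Finset.mem_sdiff.1 (hC h)).2
    have e1 : (A ∪ C) ∆ ((U \ A) ∪ C) = U := (aux_decomp hU hA hC).1
    have e2 : (A ∪ C) \ ((U \ A) ∪ C) = A := by
      ext x
      have := h1 x; have := h2 x
      simp only [Finset.mem_union, Finset.mem_sdiff]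
      tauto
    have e3 : (A ∪ C) ∩ ((U \ A) ∪ C) = C := by
      ext x
      have := h1 x; have := h2 x
      simp only [Finset.mem_union, Finset.mem_sdiff, Finset.mem_inter]
      tauto
    simp only [e1, e2, e3]
  · rintro ⟨S, T⟩ hp
    have e2 : (S \ T) ∪ (S ∩ T) = S := by
      ext x
      simp only [Finset.mem_union, Finset.mem_sdiff, Finset.mem_inter]
      tauto
    have e3 : ((S ∆ T) \ (S \ T)) ∪ (S ∩ T) = T := by
      ext x
      simp only [Finset.mem_union, Finset.mem_sdiff, Finset.mem_inter, Finset.mem_symmDiff]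
      tauto
    show H S T = H ((S \ T) ∪ (S ∩ T)) (((S ∆ T) \ (S \ T)) ∪ (S ∩ T))
    rw [e2, e3]

theorem skraw_convolution (N : ℕ) (f g : ℕ → ℝ) (j : ℕ) (hj : j ≤ N) :
    (∑ n ∈ Finset.range (N + 1), f n * skraw N j n)
      * (∑ m ∈ Finset.range (N + 1), g m * skraw N j m)
      = ∑ n ∈ Finset.range (N + 1), sconv N f g n * skraw N j n := by
  rw [aux_transform N j hj f, aux_transform N j hj g, aux_transform N j hj (sconv N f g)]
  rw [Finset.sum_mul_sum]
  have lhs : ∑ S ∈ (range N).powerset, ∑ T ∈ (range N).powerset,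
      (f S.card * (-1:ℝ)^((S ∩ range j).card)) * (g T.card * (-1:ℝ)^((T ∩ range j).card))
      = ∑ S ∈ (range N).powerset, ∑ T ∈ (range N).powerset,
        (fun S T => f S.card * g T.card * (-1:ℝ)^(((S ∆ T) ∩ range j).card)) S T := by
    refine Finset.sum_congr rfl fun S _ => Finset.sum_congr rfl fun T _ => ?_
    dsimp only
    rw [← aux_sign]
    ring
  rw [lhs, aux_bij (range N) (fun S T => f S.card * g T.card * (-1:ℝ)^(((S ∆ T) ∩ range j).card))]
  refine Finset.sum_congr rfl fun U hU => ?_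
  rw [Finset.mem_powerset] at hU
  rw [aux_sconv N f g U hU, Finset.sum_mul]
  refine Finset.sum_congr rfl fun A hA => ?_
  rw [Finset.sum_mul]
  refine Finset.sum_congr rfl fun C hC => ?_
  rw [Finset.mem_powerset] at hA hC
  obtain ⟨e1, e2, e3⟩ := aux_decomp hU hA hC
  rw [e1, e2, e3]
end

section
/- Symmetric convolution inversion: with the convolution and transforms as above, (f⋆g)(n) = 2^{−N} Σ_{j=0}^{N} F(j) G(j) k_j(n,N) for every 0 ≤ n ≤ N. -/
open Finset

open Polynomial in
lemma keyH {A : Type*} [CommRing A] [Algebra ℝ A] {N n : ℕ} (hn : n ≤ N) (x y : A) :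
    ∑ j ∈ range (N+1), skraw N n j • (x ^ (N - j) * y ^ j)
      = (x + y) ^ (N - n) * (x - y) ^ n := by
  have hrhs : (x + y) ^ (N - n) * (x - y) ^ n
      = ∑ l ∈ range (N - n + 1), ∑ i ∈ range (n + 1),
          ((((N-n).choose l : ℝ) * (n.choose i) * (-1)^i)) • (x ^ (N - (i + l)) * y ^ (i + l)) := by
    rw [show x + y = y + x from add_comm x y, show x - y = -y + x from by ring, add_pow, add_pow,
      sum_mul_sum]
    refine sum_congr rfl fun l hl => sum_congr rfl fun i hi => ?_
    simp only [mem_range] at hl hi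
    rw [show N - (i + l) = (N - n - l) + (n - i) from by omega, pow_add, neg_pow,
      Algebra.smul_def, map_mul, map_mul, map_pow, map_natCast, map_natCast, map_neg, map_one]
    ring
  rw [hrhs]
  have step1 : ∑ j ∈ range (N+1), skraw N n j • (x ^ (N - j) * y ^ j)
      = ∑ p ∈ ((range (N+1)).sigma fun j => range (j+1)),
          ((((N-n).choose (p.1 - p.2) : ℝ) * (n.choose p.2) * (-1)^p.2)) • (x ^ (N - p.1) * y ^ p.1) := by
    rw [sum_sigma]
    refine sum_congr rfl fun j _ => ?_
    rw [skraw, sum_smul]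
  rw [step1]
  rw [← sum_filter_of_ne (p := fun p : Σ _ : ℕ, ℕ => p.2 ≤ n ∧ p.1 - p.2 ≤ N - n)
    (fun p _ h => by
      by_contra hc
      rw [not_and_or, not_le, not_le] at hc
      apply h
      rcases hc with h1 | h1
      · rw [Nat.choose_eq_zero_of_lt h1]
        simp
      · rw [Nat.choose_eq_zero_of_lt h1]
        simp)]
  rw [Finset.sum_comm]
  rw [← Finset.sum_product']
  apply Finset.sum_nbij' (i := fun p => (p.2, p.1 - p.2)) (j := fun q => ⟨q.1 + q.2, q.1⟩)
  · intro p hp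
    simp only [mem_filter, mem_sigma, mem_range] at hp
    simp only [mem_product, mem_range]
    omega
  · intro q hq
    simp only [mem_product, mem_range] at hq
    simp only [mem_filter, mem_sigma, mem_range]
    omega
  · intro p hp
    simp only [mem_filter, mem_sigma, mem_range] at hp
    ext
    · simp; omega
    · simp
  · intro q hq
    simp
  · intro p hp
    simp only [mem_filter, mem_sigma, mem_range] at hp
    have : p.2 + (p.1 - p.2) = p.1 := by omega
    rw [this]

open Polynomial in
lemma coeff_gen {N j : ℕ} (hj : j ≤ N) {b : ℕ} (hb : b ≤ N) :
    ((1 + X : ℝ[X]) ^ (N - j) * (1 - X) ^ j).coeff b = skraw N j b := by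
  have h := keyH (A := ℝ[X]) hj 1 X
  simp only [one_pow, one_mul] at h
  rw [← h, finset_sum_coeff]
  simp only [coeff_smul, one_pow, one_mul, coeff_X_pow, smul_eq_mul]
  rw [Finset.sum_eq_single b]
  · simp
  · intro a _ hab
    simp [Ne.symm hab]
  · intro hbb
    simp only [mem_range, not_lt] at hbb
    omega

open Polynomial in
lemma triple {N n : ℕ} (hn : n ≤ N) {a b : ℕ} (ha : a ≤ N) (hb : b ≤ N) :
    ∑ j ∈ range (N+1), skraw N j a * skraw N j b * skraw N n j
      = 2^N * ∑ x ∈ range (n+1), ∑ y ∈ range (N-n+1),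
          (if a = x + y ∧ b = n - x + y then ((n.choose x : ℝ) * ((N-n).choose y)) else 0) := by
  set U : Polynomial (Polynomial ℝ) := C X with hU
  have hterm : ∀ j, j ≤ N → (((((1+U)*(1+X))^(N-j) * ((1-U)*(1-X))^j)).coeff b).coeff a
      = skraw N j a * skraw N j b := by
    intro j hj
    have e : ((1+U)*(1+X))^(N-j) * ((1-U)*(1-X))^j
        = C ((1+X)^(N-j)*(1-X)^j) * Polynomial.map (C : ℝ →+* Polynomial ℝ) ((1+X)^(N-j)*(1-X)^j) := by
      simp only [Polynomial.map_mul, Polynomial.map_pow, Polynomial.map_add, Polynomial.map_sub,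
        Polynomial.map_one, Polynomial.map_X, map_mul, map_pow, map_add, map_sub, map_one, hU]
      rw [mul_pow, mul_pow]
      ring
    rw [e, coeff_C_mul, Polynomial.coeff_map, coeff_gen hj hb, coeff_mul_C, coeff_gen hj ha]
  have hkey := keyH (A := Polynomial (Polynomial ℝ)) hn ((1+U)*(1+X)) ((1-U)*(1-X))
  have hkey2 : ((1+U)*(1+X) + (1-U)*(1-X))^(N-n) * ((1+U)*(1+X) - (1-U)*(1-X))^n
      = C (C ((2:ℝ)^N)) * ((1 + U*X)^(N-n) * (U+X)^n) := by
    have e1 : (1+U)*(1+X) + (1-U)*(1-X) = 2*(1+U*X) := by ring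
    have e2 : (1+U)*(1+X) - (1-U)*(1-X) = 2*(U+X) := by ring
    rw [e1, e2, mul_pow, mul_pow, map_pow, map_pow, map_ofNat, map_ofNat,
      show ((2:Polynomial (Polynomial ℝ)))^(N-n) * (1+U*X)^(N-n) * ((2:Polynomial (Polynomial ℝ))^n * (U+X)^n)
        = (2^(N-n) * 2^n) * ((1+U*X)^(N-n) * (U+X)^n) from by ring,
      ← pow_add, Nat.sub_add_cancel hn]
  have hQ : ((((1 + U*X)^(N-n) * (U+X)^n) : Polynomial (Polynomial ℝ)).coeff b).coeff a
      = ∑ x ∈ range (n+1), ∑ y ∈ range (N-n+1),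
          (if a = x + y ∧ b = n - x + y then ((n.choose x : ℝ) * ((N-n).choose y)) else 0) := by
    have eQ : ((1 + U*X)^(N-n) * (U+X)^n : Polynomial (Polynomial ℝ))
        = ∑ x ∈ range (n+1), ∑ y ∈ range (N-n+1),
            C ((C (((n.choose x : ℝ) * ((N-n).choose y)))) * X^(x+y)) * X^(n-x+y) := by
      rw [show (1 + U*X : Polynomial (Polynomial ℝ)) = U*X + 1 from add_comm _ _, add_pow, add_pow,
        sum_mul_sum, Finset.sum_comm]
      refine sum_congr rfl fun x hx => sum_congr rfl fun y hy => ?_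
      simp only [map_mul, map_pow, map_natCast, one_pow, hU]
      push_cast
      ring
    rw [eQ]
    simp only [finset_sum_coeff, coeff_C_mul, coeff_X_pow, mul_ite, mul_one, mul_zero,
      apply_ite (fun p : Polynomial ℝ => p.coeff a), coeff_zero]
    refine sum_congr rfl fun x hx => sum_congr rfl fun y hy => ?_
    rcases eq_or_ne a (x+y) with h1|h1 <;> rcases eq_or_ne b (n-x+y) with h2|h2 <;>
      simp [h1, h2]
  calc ∑ j ∈ range (N+1), skraw N j a * skraw N j b * skraw N n j
      = ((∑ j ∈ range (N+1), skraw N n j • (((1+U)*(1+X))^(N-j) * ((1-U)*(1-X))^j)).coeff b).coeff a := by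
        simp only [finset_sum_coeff, coeff_smul, smul_eq_mul]
        refine sum_congr rfl fun j hj => ?_
        simp only [mem_range] at hj
        rw [hterm j (by omega)]
        ring
    _ = ((C (C ((2:ℝ)^N)) * ((1 + U*X)^(N-n) * (U+X)^n)).coeff b).coeff a := by rw [hkey, hkey2]
    _ = 2^N * ∑ x ∈ range (n+1), ∑ y ∈ range (N-n+1),
          (if a = x + y ∧ b = n - x + y then ((n.choose x : ℝ) * ((N-n).choose y)) else 0) := by
        rw [coeff_C_mul, coeff_C_mul, hQ]

theorem skraw_convolution_inversion (N : ℕ) (f g : ℕ → ℝ) (n : ℕ) (hn : n ≤ N) :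
    sconv N f g n
      = ((2 : ℝ) ^ N)⁻¹ * ∑ j ∈ Finset.range (N + 1),
          (∑ a ∈ Finset.range (N + 1), f a * skraw N j a)
            * (∑ b ∈ Finset.range (N + 1), g b * skraw N j b)
            * skraw N n j := by
  have hS : ∑ j ∈ Finset.range (N + 1),
          (∑ a ∈ Finset.range (N + 1), f a * skraw N j a)
            * (∑ b ∈ Finset.range (N + 1), g b * skraw N j b)
            * skraw N n j
      = (2:ℝ)^N * sconv N f g n := by
    have h1 : ∑ j ∈ Finset.range (N + 1),
          (∑ a ∈ Finset.range (N + 1), f a * skraw N j a)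
            * (∑ b ∈ Finset.range (N + 1), g b * skraw N j b)
            * skraw N n j
        = ∑ j ∈ range (N+1), ∑ a ∈ range (N+1), ∑ b ∈ range (N+1),
            f a * g b * (skraw N j a * skraw N j b * skraw N n j) := by
      refine sum_congr rfl fun j _ => ?_
      rw [sum_mul_sum, sum_mul]
      refine sum_congr rfl fun a _ => ?_
      rw [sum_mul]
      exact sum_congr rfl fun b _ => by ring
    rw [h1, Finset.sum_comm]
    rw [show (∑ a ∈ range (N+1), ∑ j ∈ range (N+1), ∑ b ∈ range (N+1),
            f a * g b * (skraw N j a * skraw N j b * skraw N n j))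
        = ∑ a ∈ range (N+1), ∑ b ∈ range (N+1), ∑ j ∈ range (N+1),
            f a * g b * (skraw N j a * skraw N j b * skraw N n j) from
      sum_congr rfl fun a _ => Finset.sum_comm]
    have h2 : ∀ a ∈ range (N+1), ∀ b ∈ range (N+1),
        ∑ j ∈ range (N+1), f a * g b * (skraw N j a * skraw N j b * skraw N n j)
        = f a * g b * (2^N * ∑ x ∈ range (n+1), ∑ y ∈ range (N-n+1),
            (if a = x + y ∧ b = n - x + y then ((n.choose x : ℝ) * ((N-n).choose y)) else 0)) := by
      intro a ha b hb
      simp only [mem_range] at ha hb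
      rw [← mul_sum, triple hn (by omega) (by omega)]
    rw [sum_congr rfl fun a ha => sum_congr rfl fun b hb => h2 a ha b hb]
    have h3 : ∑ a ∈ range (N+1), ∑ b ∈ range (N+1),
        f a * g b * (2^N * ∑ x ∈ range (n+1), ∑ y ∈ range (N-n+1),
            (if a = x + y ∧ b = n - x + y then ((n.choose x : ℝ) * ((N-n).choose y)) else 0))
        = 2^N * ∑ a ∈ range (N+1), ∑ b ∈ range (N+1), ∑ x ∈ range (n+1), ∑ y ∈ range (N-n+1),
            (if a = x + y ∧ b = n - x + y then f a * g b * ((n.choose x : ℝ) * ((N-n).choose y)) else 0) := by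
      rw [mul_sum]
      refine sum_congr rfl fun a _ => ?_
      rw [mul_sum]
      refine sum_congr rfl fun b _ => ?_
      rw [mul_left_comm]
      congr 1
      rw [mul_sum]
      refine sum_congr rfl fun x _ => ?_
      rw [mul_sum]
      refine sum_congr rfl fun y _ => ?_
      rw [mul_ite, mul_zero]
    rw [h3]
    congr 1
    -- reorder sums: a,b,x,y -> x,y,a,b then collapse
    rw [show (∑ a ∈ range (N+1), ∑ b ∈ range (N+1), ∑ x ∈ range (n+1), ∑ y ∈ range (N-n+1),
            (if a = x + y ∧ b = n - x + y then f a * g b * ((n.choose x : ℝ) * ((N-n).choose y)) else 0))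
        = ∑ a ∈ range (N+1), ∑ x ∈ range (n+1), ∑ b ∈ range (N+1), ∑ y ∈ range (N-n+1), _ from
      sum_congr rfl fun a _ => Finset.sum_comm]
    rw [Finset.sum_comm]
    rw [show (∑ x ∈ range (n+1), ∑ a ∈ range (N+1), ∑ b ∈ range (N+1), ∑ y ∈ range (N-n+1),
            (if a = x + y ∧ b = n - x + y then f a * g b * ((n.choose x : ℝ) * ((N-n).choose y)) else 0))
        = ∑ x ∈ range (n+1), ∑ a ∈ range (N+1), ∑ y ∈ range (N-n+1), ∑ b ∈ range (N+1), _ from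
      sum_congr rfl fun x _ => sum_congr rfl fun a _ => Finset.sum_comm]
    rw [show (∑ x ∈ range (n+1), ∑ a ∈ range (N+1), ∑ y ∈ range (N-n+1), ∑ b ∈ range (N+1),
            (if a = x + y ∧ b = n - x + y then f a * g b * ((n.choose x : ℝ) * ((N-n).choose y)) else 0))
        = ∑ x ∈ range (n+1), ∑ y ∈ range (N-n+1), ∑ a ∈ range (N+1), ∑ b ∈ range (N+1), _ from
      sum_congr rfl fun x _ => Finset.sum_comm]
    rw [sconv]
    refine sum_congr rfl fun x hx => sum_congr rfl fun y hy => ?_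
    simp only [mem_range] at hx hy
    have hxy : x + y ∈ range (N+1) := by simp only [mem_range]; omega
    have hxy' : n - x + y ∈ range (N+1) := by simp only [mem_range]; omega
    rw [show (∑ a ∈ range (N+1), ∑ b ∈ range (N+1),
            (if a = x + y ∧ b = n - x + y then f a * g b * ((n.choose x : ℝ) * ((N-n).choose y)) else 0))
        = ∑ a ∈ range (N+1), (if a = x + y then f a * g (n-x+y) * ((n.choose x : ℝ) * ((N-n).choose y)) else 0) from
      sum_congr rfl fun a _ => by
        rcases eq_or_ne a (x+y) with h|h
        · simp only [h, true_and]
          rw [Finset.sum_ite_eq' (range (N+1)) (n-x+y)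
            (fun b => f (x+y) * g b * ((n.choose x : ℝ) * ((N-n).choose y))), if_pos hxy']
          simp
        · simp [h]]
    rw [Finset.sum_ite_eq' (range (N+1)) (x+y)
      (fun a => f a * g (n-x+y) * ((n.choose x : ℝ) * ((N-n).choose y))), if_pos hxy]
    ring
  rw [hS, ← mul_assoc, inv_mul_cancel₀ (by positivity), one_mul]
end

section
/- Dual transform of the binomial basis: let f_m(j) = C(m,j) p^{m−j} q^j for 0 ≤ m ≤ N. Then Σ_{j=0}^{N} k_n(j,N) f_m(j) = C(N−m, n) (λq)^n for all 0 ≤ n ≤ N. In particular, the Krawtchouk transform maps the m-th binomial column to the (N−m)-th binomial column of coefficients scaled by powers of λq. -/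
/-!
`k_n(j, N)` is `λ^n` times the coefficient of `x^n` in `(1 + q x)^(N - j) (1 - p x)^j`.
Summing these generating polynomials against `f_m(j)` and factoring out `(1 + q x)^(N - m)`
leaves, by the binomial theorem, `(q (1 - p x) + p (1 + q x))^m = (p + q)^m = 1`; hence the sum
is `(1 + q x)^(N - m)`, whose `n`-th coefficient is `C(N - m, n) q^n`.
-/

open Finset

open Polynomial

theorem Polynomial.coeff_one_add_C_mul_X_pow_s18 {R : Type*} [CommSemiring R] (a : R) (k i : ℕ) :
    ((1 + C a * X) ^ k).coeff i = k.choose i * a ^ i := by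
  have : (1 + C a * X) ^ k = ((1 + X) ^ k).comp (C a * X) := by simp
  rw [this, comp_C_mul_X_coeff, coeff_one_add_X_pow]

theorem sum_range_choose_pow_mul_pow_eq_pow_mul_add_pow {S : Type*} [CommSemiring S]
    (p q u v : S) {m N : ℕ} (hm : m ≤ N) :
    ∑ j ∈ range (N + 1), m.choose j * p ^ (m - j) * q ^ j * (u ^ (N - j) * v ^ j)
      = u ^ (N - m) * (q * v + p * u) ^ m := by
  rw [add_pow, mul_sum]
  refine (sum_subset (range_subset_range.2 (by omega)) fun j _ hj => ?_).symm.trans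
    (sum_congr rfl fun j hj => ?_)
  · rw [mem_range, not_lt] at hj
    simp [Nat.choose_eq_zero_of_lt hj]
  · rw [mem_range, Nat.lt_succ_iff] at hj
    rw [show N - j = (N - m) + (m - j) by omega]
    ring

noncomputable def krawtchoukGenFun {R : Type*} [CommRing R] (p q : R) (N j : ℕ) : R[X] :=
  (1 + C q * X) ^ (N - j) * (1 + C (-p) * X) ^ j

theorem kraw_eq_coeff_krawtchoukGenFun (lam p q : ℝ) (N j n : ℕ) :
    kraw lam p q N j n = lam ^ n * (krawtchoukGenFun p q N j).coeff n := by
  rw [krawtchoukGenFun, coeff_mul, Nat.sum_antidiagonal_eq_sum_range_succ_mk, kraw,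
    ← sum_range_reflect]
  congr 1
  refine sum_congr rfl fun i hi => ?_
  rw [mem_range, Nat.lt_succ_iff] at hi
  simp only [coeff_one_add_C_mul_X_pow_s18, Nat.add_sub_cancel, Nat.sub_sub_self hi, neg_pow p]
  ring

theorem sum_binomial_mul_krawtchoukGenFun {R : Type*} [CommRing R] {p q : R} (hpq : p + q = 1)
    {m N : ℕ} (hm : m ≤ N) :
    ∑ j ∈ range (N + 1), C (m.choose j * p ^ (m - j) * q ^ j) * krawtchoukGenFun p q N j
      = (1 + C q * X) ^ (N - m) := by
  have hone : C q * (1 + C (-p) * X) + C p * (1 + C q * X) = 1 := by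
    calc C q * (1 + C (-p) * X) + C p * (1 + C q * X) = C (p + q) := by
          rw [C_neg, C_add]; ring
      _ = 1 := by rw [hpq, C_1]
  calc ∑ j ∈ range (N + 1), C (m.choose j * p ^ (m - j) * q ^ j) * krawtchoukGenFun p q N j
      = ∑ j ∈ range (N + 1), (m.choose j : R[X]) * C p ^ (m - j) * C q ^ j *
          ((1 + C q * X) ^ (N - j) * (1 + C (-p) * X) ^ j) := by
        simp only [krawtchoukGenFun, map_mul, map_pow, map_natCast]
    _ = (1 + C q * X) ^ (N - m) := by
        rw [sum_range_choose_pow_mul_pow_eq_pow_mul_add_pow _ _ _ _ hm, hone, one_pow, mul_one]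

theorem kraw_dual_binomial_transform_general (lam p q : ℝ) (hpq : p + q = 1) (N m n : ℕ)
    (hm : m ≤ N) :
    ∑ j ∈ Finset.range (N + 1),
        kraw lam p q N j n * ((m.choose j : ℝ) * p ^ (m - j) * q ^ j)
      = ((N - m).choose n : ℝ) * (lam * q) ^ n := by
  calc ∑ j ∈ range (N + 1), kraw lam p q N j n * ((m.choose j : ℝ) * p ^ (m - j) * q ^ j)
      = lam ^ n * (∑ j ∈ range (N + 1),
          C ((m.choose j : ℝ) * p ^ (m - j) * q ^ j) * krawtchoukGenFun p q N j).coeff n := by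
        simp only [finsetSum_coeff, coeff_C_mul, kraw_eq_coeff_krawtchoukGenFun, mul_sum]
        exact sum_congr rfl fun j _ => by ring
    _ = ((N - m).choose n : ℝ) * (lam * q) ^ n := by
        rw [sum_binomial_mul_krawtchoukGenFun hpq hm, coeff_one_add_C_mul_X_pow_s18]
        ring

theorem kraw_dual_binomial_transform (lam p q : ℝ) (hpq : p + q = 1) (N m n : ℕ)
    (hm : m ≤ N) (hn : n ≤ N) :
    ∑ j ∈ Finset.range (N + 1),
        kraw lam p q N j n * ((m.choose j : ℝ) * p ^ (m - j) * q ^ j)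
      = ((N - m).choose n : ℝ) * (lam * q) ^ n :=
  kraw_dual_binomial_transform_general lam p q hpq N m n hm
end

section
/- Row binomial transform: let f_i(n) = C(N−n, N−i) p^{i−n} λ^{−n} for 0 ≤ n ≤ i ≤ N (zero otherwise). Then Σ_{n=0}^{N} f_i(n) k_n(j,N) = C(N−j, i) for all 0 ≤ i, j ≤ N. -/
open Finset

open Polynomial in
lemma kraw_coeff_one_add_CX_pow (p : ℝ) (k r : ℕ) :
    ((1 + C p * X : ℝ[X]) ^ k).coeff r = (k.choose r : ℝ) * p ^ r := by
  rw [add_comm, add_pow]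
  simp only [one_pow, mul_one, mul_pow, ← C_pow, finset_sum_coeff, ← C_eq_natCast,
    coeff_mul_C, coeff_C_mul, coeff_X_pow, mul_ite, ite_mul, mul_one, mul_zero, zero_mul]
  rw [Finset.sum_ite_eq]
  split
  · ring
  · rename_i h
    rw [Nat.choose_eq_zero_of_lt (by simp at h; omega)]
    simp

open Polynomial in
lemma kraw_stepA (p q : ℝ) (hpq : p + q = 1) (N i j : ℕ) (hj : j ≤ N) :
    ∑ t ∈ range (N - j + 1), ∑ m ∈ range (j + 1),
      ((N - j).choose t : ℝ) * q ^ t * (j.choose m : ℝ) * (-1) ^ m * p ^ m *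
        (if t + m ≤ i then ((N - (t + m)).choose (i - (t + m)) : ℝ) * p ^ (i - (t + m)) else 0)
      = ((N - j).choose i : ℝ) := by
  set P : ℝ[X] := 1 + C p * X with hP
  have hq : C q = 1 - C p := by
    rw [← C_1, ← C_sub]
    congr 1
    linarith
  have h2 : -(C p * X) + P = 1 := by rw [hP]; ring
  have h1 : C q * X + P = 1 + X := by rw [hP, hq]; ring
  have h0 : ((1 : ℝ[X]) + X) ^ (N - j) = (C q * X + P) ^ (N - j) * (-(C p * X) + P) ^ j := by
    rw [h1, h2, one_pow, mul_one]
  have hc := congrArg (fun f : ℝ[X] => f.coeff i) h0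
  rw [coeff_one_add_X_pow, add_pow, add_pow, Finset.sum_mul_sum, finset_sum_coeff] at hc
  rw [hc]
  refine Finset.sum_congr rfl fun t ht => ?_
  rw [finset_sum_coeff]
  refine Finset.sum_congr rfl fun m hm => ?_
  rw [mem_range] at ht hm
  have hpow : (N - j - t) + (j - m) = N - (t + m) := by omega
  have e : (C q * X) ^ t * P ^ (N - j - t) * (((N - j).choose t : ℕ) : ℝ[X]) *
        ((-(C p * X)) ^ m * P ^ (j - m) * ((j.choose m : ℕ) : ℝ[X]))
      = C (((N - j).choose t : ℝ) * q ^ t * (j.choose m : ℝ) * (-1) ^ m * p ^ m) *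
        (P ^ (N - (t + m)) * X ^ (t + m)) := by
    rw [← hpow, pow_add, pow_add]
    simp only [map_mul, map_pow, map_neg, map_one, C_eq_natCast]
    ring
  rw [e, coeff_C_mul, coeff_mul_X_pow', kraw_coeff_one_add_CX_pow]

lemma kraw_tri_swap (N : ℕ) (F : ℕ → ℕ → ℝ) :
    ∑ n ∈ range (N + 1), ∑ m ∈ range (n + 1), F m (n - m)
      = ∑ m ∈ range (N + 1), ∑ t ∈ range (N + 1 - m), F m t := by
  rw [Finset.sum_sigma', Finset.sum_sigma']
  refine Finset.sum_nbij' (fun x => ⟨x.2, x.1 - x.2⟩) (fun y => ⟨y.1 + y.2, y.1⟩)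
    ?_ ?_ ?_ ?_ (fun _ _ => rfl)
  · rintro ⟨n, m⟩ h
    simp only [mem_sigma, mem_range] at h ⊢
    omega
  · rintro ⟨m, t⟩ h
    simp only [mem_sigma, mem_range] at h ⊢
    omega
  · rintro ⟨n, m⟩ h
    simp only [mem_sigma, mem_range] at h
    have : m + (n - m) = n := by omega
    simp [this]
  · rintro ⟨m, t⟩ h
    simp only [mem_sigma, mem_range] at h
    have : m + t - m = t := by omega
    simp [this]

theorem kraw_row_binomial_transform (lam p q : ℝ) (hpq : p + q = 1)
    (hlam : lam ≠ 0) (hp : p ≠ 0) (N i j : ℕ) (hi : i ≤ N) (hj : j ≤ N) :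
    ∑ n ∈ Finset.range (N + 1),
        (if n ≤ i then ((N - n).choose (N - i) : ℝ) * p ^ (i - n) * (lam ^ n)⁻¹ else 0)
          * kraw lam p q N j n
      = ((N - j).choose i : ℝ) := by
  have hF0 : ∀ m t : ℕ, (N - j < t ∨ j < m) →
      ((N - j).choose t : ℝ) * q ^ t * (j.choose m : ℝ) * (-1) ^ m * p ^ m *
        (if t + m ≤ i then ((N - (t + m)).choose (i - (t + m)) : ℝ) * p ^ (i - (t + m)) else 0)
        = 0 := by
    rintro m t (h | h)
    · rw [Nat.choose_eq_zero_of_lt h]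
      push_cast
      ring
    · rw [Nat.choose_eq_zero_of_lt h]
      push_cast
      ring
  calc
    ∑ n ∈ Finset.range (N + 1),
        (if n ≤ i then ((N - n).choose (N - i) : ℝ) * p ^ (i - n) * (lam ^ n)⁻¹ else 0)
          * kraw lam p q N j n
      = ∑ n ∈ range (N + 1), ∑ m ∈ range (n + 1),
          (fun m t => ((N - j).choose t : ℝ) * q ^ t * (j.choose m : ℝ) * (-1) ^ m * p ^ m *
            (if t + m ≤ i then ((N - (t + m)).choose (i - (t + m)) : ℝ) * p ^ (i - (t + m)) else 0))
            m (n - m) := by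
        refine Finset.sum_congr rfl fun n hn => ?_
        rw [mem_range] at hn
        unfold kraw
        simp only
        by_cases hni : n ≤ i
        · rw [if_pos hni]
          have hlamn : lam ^ n ≠ 0 := pow_ne_zero _ hlam
          rw [show ((N - n).choose (N - i) : ℝ) * p ^ (i - n) * (lam ^ n)⁻¹ *
              (lam ^ n * ∑ m ∈ Finset.range (n + 1),
                ((N - j).choose (n - m) : ℝ) * (j.choose m : ℝ) * (-1) ^ m * p ^ m * q ^ (n - m))
              = ((N - n).choose (N - i) : ℝ) * p ^ (i - n) *
                ∑ m ∈ Finset.range (n + 1),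
                  ((N - j).choose (n - m) : ℝ) * (j.choose m : ℝ) * (-1) ^ m * p ^ m * q ^ (n - m)
            from by field_simp]
          rw [Finset.mul_sum]
          refine Finset.sum_congr rfl fun m hm => ?_
          rw [mem_range] at hm
          have h1 : (n - m) + m = n := by omega
          rw [h1, if_pos hni]
          have h2 : ((N - n).choose (N - i)) = ((N - n).choose (i - n)) := by
            rw [show N - i = (N - n) - (i - n) from by omega, Nat.choose_symm (by omega)]
          rw [h2]
          ring
        · rw [if_neg hni, zero_mul]
          symm
          refine Finset.sum_eq_zero fun m hm => ?_
          rw [mem_range] at hm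
          rw [if_neg (by omega : ¬ ((n - m) + m ≤ i))]
          ring
    _ = ∑ m ∈ range (N + 1), ∑ t ∈ range (N + 1 - m),
          ((N - j).choose t : ℝ) * q ^ t * (j.choose m : ℝ) * (-1) ^ m * p ^ m *
            (if t + m ≤ i then ((N - (t + m)).choose (i - (t + m)) : ℝ) * p ^ (i - (t + m)) else 0) :=
        kraw_tri_swap N (fun m t =>
          ((N - j).choose t : ℝ) * q ^ t * (j.choose m : ℝ) * (-1) ^ m * p ^ m *
            (if t + m ≤ i then ((N - (t + m)).choose (i - (t + m)) : ℝ) * p ^ (i - (t + m)) else 0))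
    _ = ∑ m ∈ range (N + 1), ∑ t ∈ range (N + 1),
          ((N - j).choose t : ℝ) * q ^ t * (j.choose m : ℝ) * (-1) ^ m * p ^ m *
            (if t + m ≤ i then ((N - (t + m)).choose (i - (t + m)) : ℝ) * p ^ (i - (t + m)) else 0) := by
        refine Finset.sum_congr rfl fun m hm => ?_
        rw [mem_range] at hm
        refine Finset.sum_subset (Finset.range_subset_range.2 (by omega)) fun t ht hnt => ?_
        rw [mem_range] at ht hnt
        exact hF0 m t (by omega)
    _ = ∑ t ∈ range (N + 1), ∑ m ∈ range (N + 1),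
          ((N - j).choose t : ℝ) * q ^ t * (j.choose m : ℝ) * (-1) ^ m * p ^ m *
            (if t + m ≤ i then ((N - (t + m)).choose (i - (t + m)) : ℝ) * p ^ (i - (t + m)) else 0) :=
        Finset.sum_comm
    _ = ∑ t ∈ range (N - j + 1), ∑ m ∈ range (N + 1),
          ((N - j).choose t : ℝ) * q ^ t * (j.choose m : ℝ) * (-1) ^ m * p ^ m *
            (if t + m ≤ i then ((N - (t + m)).choose (i - (t + m)) : ℝ) * p ^ (i - (t + m)) else 0) := by
        symm
        refine Finset.sum_subset (Finset.range_subset_range.2 (by omega)) fun t ht hnt => ?_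
        rw [mem_range] at ht hnt
        exact Finset.sum_eq_zero fun m _ => hF0 m t (by omega)
    _ = ∑ t ∈ range (N - j + 1), ∑ m ∈ range (j + 1),
          ((N - j).choose t : ℝ) * q ^ t * (j.choose m : ℝ) * (-1) ^ m * p ^ m *
            (if t + m ≤ i then ((N - (t + m)).choose (i - (t + m)) : ℝ) * p ^ (i - (t + m)) else 0) := by
        symm
        refine Finset.sum_congr rfl fun t ht => ?_
        refine Finset.sum_subset (Finset.range_subset_range.2 (by omega)) fun m hm hnm => ?_
        rw [mem_range] at hm hnm
        exact hF0 m t (by omega)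
    _ = ((N - j).choose i : ℝ) := kraw_stepA p q hpq N i j hj
end
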